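/- arXiv:2603.11999 — 9 statements merged into one kernel-verified Lean document; each statement's English description precedes it below -/
import Mathlib

section
/- Let H be a Hilbert space, η ∈ L(H) a bounded operator with Re η ≥ 0 (i.e., Re⟨ηx, x⟩ ≥ 0 for all x), and A : dom(A) ⊆ H → H skew-selfadjoint. Then B := -(η + A) is m-dissipative, i.e., B is dissipative and ran(1 - B) = H. -/
/-!
Skewness gives `Re ⟪A x, x⟫ = 0`, so `Re ⟪(η + A) x, x⟫ = Re ⟪η x, x⟫ ≥ 0`. For the range
condition put `C := 1 + η`, so that `1 - B = C + A` and `Re ⟪C x, x⟫ ≥ ‖x‖²`. The operator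
`C + A` is closed (`A = -A†` is closed and `C` is bounded) and bounded below by this coercivity,
so its range is closed. A vector `y` orthogonal to the range lies in `dom A† = dom A` with
`A y = C† y`, whence `0 = Re ⟪A y, y⟫ = Re ⟪C y, y⟫ ≥ ‖y‖²` and `y = 0`.
-/

open scoped InnerProductSpace

theorem mul_norm_le_norm_of_mul_norm_sq_le_re_inner {𝕜 E : Type*} [RCLike 𝕜]
    [NormedAddCommGroup E] [InnerProductSpace 𝕜 E] {c : ℝ} {x y : E}
    (h : c * ‖x‖ ^ 2 ≤ RCLike.re ⟪y, x⟫_𝕜) :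
    c * ‖x‖ ≤ ‖y‖ := by
  rcases (norm_nonneg x).eq_or_lt with hx | hx
  · rw [← hx, mul_zero]; exact norm_nonneg y
  · have := h.trans (re_inner_le_norm y x)
    nlinarith

namespace LinearPMap

section Closed

variable {R E F : Type*} [CommRing R] [AddCommGroup E] [AddCommGroup F] [Module R E] [Module R F]
  [TopologicalSpace E] [TopologicalSpace F] [IsTopologicalAddGroup F]

theorem IsClosed.neg {f : E →ₗ.[R] F} (hf : f.IsClosed) : (-f).IsClosed := by
  have hgraph : ((-f).graph : Set (E × F)) = (fun p : E × F => (p.1, -p.2)) ⁻¹' f.graph := by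
    ext ⟨x, y⟩
    simp [neg_apply, neg_eq_iff_eq_neg]
  rw [IsClosed, hgraph]
  exact hf.preimage (by fun_prop)

theorem IsClosed.clm_vadd {f : E →ₗ.[R] F} (hf : f.IsClosed) (C : E →L[R] F) :
    ((C : E →ₗ[R] F) +ᵥ f).IsClosed := by
  have hgraph : (((C : E →ₗ[R] F) +ᵥ f).graph : Set (E × F)) =
      (fun p : E × F => (p.1, p.2 - C p.1)) ⁻¹' f.graph := by
    ext ⟨x, y⟩
    simp only [SetLike.mem_coe, mem_graph_iff, vadd_apply, Set.mem_preimage]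
    exact exists_congr fun z => and_congr_right fun hz => by
      rw [← hz, eq_sub_iff_add_eq, add_comm]; rfl
  rw [IsClosed, hgraph]
  exact hf.preimage (by fun_prop)

end Closed

theorem IsClosed.isClosed_range_of_mul_norm_le {R E F : Type*} [CommRing R] [NormedAddCommGroup E]
    [NormedAddCommGroup F] [Module R E] [Module R F] [CompleteSpace E] {f : E →ₗ.[R] F}
    (hf : f.IsClosed) {c : ℝ} (hc : 0 < c) (hbelow : ∀ x : f.domain, c * ‖(x : E)‖ ≤ ‖f x‖) :
    _root_.IsClosed (Set.range f) := by
  refine isSeqClosed_iff_isClosed.mp fun u y hu huy => ?_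
  choose x hx using hu
  have hcauchy : CauchySeq fun n => (x n : E) := by
    refine Metric.cauchySeq_iff.mpr fun ε hε => ?_
    obtain ⟨N, hN⟩ := Metric.cauchySeq_iff.mp huy.cauchySeq (c * ε) (by positivity)
    refine ⟨N, fun m hm n hn => ?_⟩
    have h := hbelow (x m - x n)
    rw [f.map_sub, hx, hx, Submodule.coe_sub, ← dist_eq_norm, ← dist_eq_norm] at h
    exact lt_of_mul_lt_mul_left (h.trans_lt (hN m hm n hn)) hc.le
  obtain ⟨x₀, hx₀⟩ := cauchySeq_tendsto_of_complete hcauchy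
  have hmem : (x₀, y) ∈ f.graph :=
    hf.mem_of_tendsto (hx₀.prodMk_nhds (by simpa only [hx] using huy))
      (Filter.Eventually.of_forall fun n => f.mem_graph (x n))
  obtain ⟨z, rfl, hz⟩ := f.mem_graph_iff.mp hmem
  exact ⟨z, hz⟩

section InnerProduct

variable {𝕜 E F : Type*} [RCLike 𝕜] [NormedAddCommGroup E] [InnerProductSpace 𝕜 E]
  [NormedAddCommGroup F] [InnerProductSpace 𝕜 F]

theorem inner_apply_eq_neg_inner_apply_of_adjoint_eq_neg [CompleteSpace E] {A : E →ₗ.[𝕜] E}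
    (hdense : Dense (A.domain : Set E)) (hskew : A† = -A) (x y : A.domain) :
    ⟪A x, y⟫_𝕜 = -⟪(x : E), A y⟫_𝕜 := by
  have h := A.adjoint_isFormalAdjoint hdense
  rw [hskew] at h
  rw [← h x y, neg_apply, inner_neg_left, neg_neg]

theorem re_inner_apply_self_eq_zero_of_adjoint_eq_neg [CompleteSpace E] {A : E →ₗ.[𝕜] E}
    (hdense : Dense (A.domain : Set E)) (hskew : A† = -A) (x : A.domain) :
    RCLike.re ⟪A x, x⟫_𝕜 = 0 := by
  have h := congrArg RCLike.re (inner_apply_eq_neg_inner_apply_of_adjoint_eq_neg hdense hskew x x)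
  rw [_root_.map_neg, inner_re_symm (x : E)] at h
  linarith

theorem exists_adjoint_apply_eq_of_forall_inner_eq_zero [CompleteSpace E] [CompleteSpace F]
    {T : E →ₗ.[𝕜] F}
    (hdense : Dense (T.domain : Set E)) (C : E →L[𝕜] F) {y : F}
    (hy : ∀ x : T.domain, ⟪C x + T x, y⟫_𝕜 = 0) :
    ∃ hy' : y ∈ T†.domain, T† ⟨y, hy'⟩ = -(ContinuousLinearMap.adjoint C y) := by
  have hinner : ∀ x : T.domain, ⟪-(ContinuousLinearMap.adjoint C y), x⟫_𝕜 = ⟪y, T x⟫_𝕜 := by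
    intro x
    have h : ⟪T x, y⟫_𝕜 = -⟪C x, y⟫_𝕜 :=
      eq_neg_of_add_eq_zero_right (by rw [← inner_add_left]; exact hy x)
    rw [inner_neg_left, ContinuousLinearMap.adjoint_inner_left, ← inner_conj_symm y (T x), h,
      _root_.map_neg, inner_conj_symm]
  have hmem := T.mem_adjoint_domain_of_exists y ⟨_, hinner⟩
  exact ⟨hmem, adjoint_apply_eq hdense ⟨y, hmem⟩ hinner⟩

theorem surjective_clm_vadd_of_adjoint_eq_neg [CompleteSpace E] {A : E →ₗ.[𝕜] E}
    (hdense : Dense (A.domain : Set E)) (hskew : A† = -A) (C : E →L[𝕜] E) {c : ℝ} (hc : 0 < c)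
    (hC : ∀ x, c * ‖x‖ ^ 2 ≤ RCLike.re ⟪C x, x⟫_𝕜) :
    Function.Surjective ((C : E →ₗ[𝕜] E) +ᵥ A) := by
  set T := (C : E →ₗ[𝕜] E) +ᵥ A
  have hre := re_inner_apply_self_eq_zero_of_adjoint_eq_neg hdense hskew
  have hA : A.IsClosed := by
    rw [← neg_neg A, ← hskew]
    exact (A.adjoint_isClosed hdense).neg
  have hbelow (x : T.domain) : c * ‖(x : E)‖ ≤ ‖T x‖ := by
    refine mul_norm_le_norm_of_mul_norm_sq_le_re_inner (𝕜 := 𝕜) ?_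
    rw [vadd_apply, inner_add_left, _root_.map_add, hre x, add_zero]
    exact hC x
  have hrange : _root_.IsClosed (LinearMap.range T.toFun : Set E) :=
    (hA.clm_vadd C).isClosed_range_of_mul_norm_le hc hbelow
  have horth : (LinearMap.range T.toFun)ᗮ = ⊥ := by
    refine (Submodule.eq_bot_iff _).mpr fun y hy => ?_
    have h := exists_adjoint_apply_eq_of_forall_inner_eq_zero hdense C
      fun x => (Submodule.mem_orthogonal _ _).mp hy _ ⟨x, rfl⟩
    rw [hskew] at h
    obtain ⟨hy', hAy⟩ := h
    have : c * ‖y‖ ^ 2 ≤ 0 := by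
      calc c * ‖y‖ ^ 2 ≤ RCLike.re ⟪C y, y⟫_𝕜 := hC y
        _ = RCLike.re ⟪A ⟨y, hy'⟩, y⟫_𝕜 := by
          rw [← neg_neg (A _), ← neg_apply, hAy, neg_neg, ContinuousLinearMap.adjoint_inner_left,
            inner_re_symm]
        _ = 0 := hre ⟨y, hy'⟩
    by_contra hy0
    linarith [mul_pos hc (pow_pos (norm_pos_iff.mpr hy0) 2)]
  have : CompleteSpace (LinearMap.range T.toFun) := hrange.completeSpace_coe
  exact LinearMap.range_eq_top.mp (Submodule.orthogonal_eq_bot_iff.mp horth)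

end InnerProduct

end LinearPMap

/-- If `η` is a bounded operator with `Re ⟪η x, x⟫ ≥ 0` and `A` is a
densely defined skew-selfadjoint operator (`A† = -A`), then `B := -(η + A)`
(with domain `dom A`) is m-dissipative: `B` is dissipative and `ran (1 - B) = H`. -/
theorem stmt0 {H : Type*} [NormedAddCommGroup H] [InnerProductSpace ℂ H] [CompleteSpace H]
    (η : H →L[ℂ] H) (hη : ∀ x : H, 0 ≤ (inner ℂ (η x) x : ℂ).re)
    (A : H →ₗ.[ℂ] H) (hdense : Dense (A.domain : Set H))
    (hskew : A.adjoint = -A) :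
    (∀ x : A.domain, (inner ℂ (-(η ↑x + A x)) (x : H) : ℂ).re ≤ 0) ∧
      ∀ y : H, ∃ x : A.domain, (x : H) - (-(η ↑x + A x)) = y := by
  have hre := LinearPMap.re_inner_apply_self_eq_zero_of_adjoint_eq_neg hdense hskew
  refine ⟨fun x => ?_, fun y => ?_⟩
  · have hAx : (inner ℂ (A x) (x : H)).re = 0 := hre x
    rw [inner_neg_left, inner_add_left, Complex.neg_re, Complex.add_re, hAx]
    linarith [hη x]
  · have hcoercive (x : H) : 1 * ‖x‖ ^ 2 ≤ RCLike.re ⟪(1 + η) x, x⟫_ℂ := by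
      rw [add_apply, one_apply_eq_self, inner_add_left, map_add,
        inner_self_eq_norm_sq, one_mul, RCLike.re_to_complex]
      linarith [hη x]
    obtain ⟨x, hx⟩ :=
      LinearPMap.surjective_clm_vadd_of_adjoint_eq_neg hdense hskew (1 + η) one_pos hcoercive y
    refine ⟨x, ?_⟩
    rw [← hx, LinearPMap.vadd_apply, ContinuousLinearMap.coe_coe, add_apply,
      one_apply_eq_self, sub_neg_eq_add, add_assoc]
end

section
/- Let H₀, H₁ be Hilbert spaces, γ ∈ L(H₀) a bounded operator with Re γ ≥ 0, and C : dom(C) ⊆ H₀ → H₁ densely defined and closed. Then the block operator B := -[[γ, 0],[0, 0]] - [[0, -C*],[C, 0]] with domain dom(C) × dom(C*) on H₀ × H₁ is m-dissipative. -/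
/-!
Dissipativity is the skew-symmetry `Re ⟪C† v, u⟫ = Re ⟪C u, v⟫` together with `Re γ ≥ 0`.
For the range condition put `v := g - C u`: the equations `(1 - B)(u, v) = (f, g)` become
`C† v = u + γ u - f`, i.e. the variational problem
`⟪u + γ u, x⟫ + ⟪C u, C x⟫ = ⟪f, x⟫ + ⟪g, C x⟫` for all `x ∈ dom C`. As `C` is closed, its graph
is a Hilbert space, on which this sesquilinear form is coercive, so Lax–Milgram solves it.
-/

open scoped InnerProductSpace
open RCLike

section Coercive

variable {𝕜 E : Type*} [RCLike 𝕜] [NormedAddCommGroup E] [InnerProductSpace 𝕜 E]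

theorem ContinuousLinearMap.surjective_of_coercive [CompleteSpace E] (T : E →L[𝕜] E) {c : ℝ}
    (hc : 0 < c) (hT : ∀ x, c * ‖x‖ ^ 2 ≤ re ⟪T x, x⟫_𝕜) : Function.Surjective T := by
  have hbound : ∀ x, ‖x‖ ≤ c⁻¹ * ‖T x‖ := by
    intro x
    rw [le_inv_mul_iff₀ hc]
    rcases (norm_nonneg x).eq_or_lt with hx | hx
    · rw [← hx, mul_zero]; exact norm_nonneg _
    · have := (hT x).trans (re_inner_le_norm (T x) x)
      nlinarith
  have hclosed : IsClosed ((T : E →ₗ[𝕜] E).range : Set E) := by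
    rw [LinearMap.coe_range]
    exact (T.antilipschitz_of_bound (K := ⟨c⁻¹, by positivity⟩) hbound).isClosed_range
      T.uniformContinuous
  have : CompleteSpace (T : E →ₗ[𝕜] E).range := hclosed.completeSpace_coe
  refine LinearMap.range_eq_top.mp ?_
  rw [← Submodule.orthogonal_eq_bot_iff, Submodule.eq_bot_iff]
  intro q hq
  have hTq : ⟪T q, q⟫_𝕜 = 0 := (Submodule.mem_orthogonal _ q).mp hq (T q) ⟨q, rfl⟩
  have hcoer := hT q
  rw [hTq, map_zero] at hcoer
  have hq0 : ‖q‖ ^ 2 ≤ 0 := nonpos_of_mul_nonpos_right hcoer hc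
  simpa using hq0

theorem Submodule.exists_mem_forall_inner_add_eq (K : Submodule 𝕜 E) [CompleteSpace K]
    (M : E →L[𝕜] E) (hM : ∀ x, 0 ≤ re ⟪M x, x⟫_𝕜) (w : E) :
    ∃ p ∈ K, ∀ q ∈ K, ⟪p + M p, q⟫_𝕜 = ⟪w, q⟫_𝕜 := by
  let T : K →L[𝕜] K := .id 𝕜 K + K.orthogonalProjectionOnto ∘L M ∘L K.subtypeL
  have hT : ∀ p q : K, ⟪T p, q⟫_𝕜 = ⟪(p : E) + M p, q⟫_𝕜 := by
    intro p q
    simp [T, inner_add_left]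
  obtain ⟨p, hp⟩ := T.surjective_of_coercive one_pos (fun p => by
    rw [hT, inner_add_left, map_add, inner_self_eq_norm_sq, one_mul, Submodule.coe_norm]
    linarith [hM p]) (K.orthogonalProjectionOnto w)
  refine ⟨p, p.2, fun q hq => ?_⟩
  rw [← hT p ⟨q, hq⟩, hp, inner_orthogonalProjectionOnto_eq_of_mem_right]

end Coercive

namespace LinearPMap

variable {𝕜 E F : Type*} [RCLike 𝕜] [NormedAddCommGroup E] [InnerProductSpace 𝕜 E]
  [NormedAddCommGroup F] [InnerProductSpace 𝕜 F]

theorem exists_forall_inner_sub_eq_inner_sub [CompleteSpace E] [CompleteSpace F]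
    {C : E →ₗ.[𝕜] F} (hC : C.IsClosed) (γ : E →L[𝕜] E) (hγ : ∀ x, 0 ≤ re ⟪γ x, x⟫_𝕜)
    (f : E) (g : F) :
    ∃ u : C.domain, ∀ x : C.domain, ⟪(u : E) + γ u - f, x⟫_𝕜 = ⟪g - C u, C x⟫_𝕜 := by
  let e := WithLp.prodContinuousLinearEquiv 2 𝕜 E F
  let K : Submodule 𝕜 (WithLp 2 (E × F)) := C.graph.comap (e : WithLp 2 (E × F) →ₗ[𝕜] E × F)
  have : CompleteSpace K := (hC.preimage e.continuous).completeSpace_coe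
  let M : WithLp 2 (E × F) →L[𝕜] WithLp 2 (E × F) :=
    e.symm.toContinuousLinearMap ∘L γ.prodMap (0 : F →L[𝕜] F) ∘L e.toContinuousLinearMap
  have hM_apply : ∀ x, M x = WithLp.toLp 2 (γ x.fst, 0) := fun _ => rfl
  have hM : ∀ x, 0 ≤ re ⟪M x, x⟫_𝕜 := fun x => by
    simpa [hM_apply, WithLp.prod_inner_apply] using hγ x.fst
  obtain ⟨p, hpK, hp⟩ := K.exists_mem_forall_inner_add_eq M hM (WithLp.toLp 2 (f, g))
  obtain ⟨u, hu : (u : E) = p.fst, hCu : C u = p.snd⟩ := C.mem_graph_iff.mp hpK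
  refine ⟨u, fun x => ?_⟩
  have hpx := hp (WithLp.toLp 2 (x, C x)) (C.mem_graph x)
  simp only [hM_apply, WithLp.prod_inner_apply, WithLp.ofLp_add, Prod.fst_add, WithLp.ofLp_fst,
    Prod.snd_add, WithLp.ofLp_snd, add_zero] at hpx
  rw [inner_sub_left, inner_sub_left, hu, hCu]
  linear_combination hpx

end LinearPMap

/-- For `γ` bounded with `Re γ ≥ 0` and `C` densely defined and closed, the
block operator `B = -[[γ,0],[0,0]] - [[0,-C*],[C,0]]`, sending
`(u, v) ∈ dom C × dom C*` to `(-γ u + C* v, -C u)`, is m-dissipative on `H₀ × H₁`: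
dissipative (w.r.t. the product inner product
`⟪(a,b),(c,d)⟫ = ⟪a,c⟫ + ⟪b,d⟫`) and `1 - B` is surjective. -/
theorem stmt1 {H₀ H₁ : Type*} [NormedAddCommGroup H₀] [InnerProductSpace ℂ H₀] [CompleteSpace H₀]
    [NormedAddCommGroup H₁] [InnerProductSpace ℂ H₁] [CompleteSpace H₁]
    (γ : H₀ →L[ℂ] H₀) (hγ : ∀ x : H₀, 0 ≤ (inner ℂ (γ x) x : ℂ).re)
    (C : H₀ →ₗ.[ℂ] H₁) (hdense : Dense (C.domain : Set H₀)) (hclosed : C.IsClosed) :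
    (∀ (u : C.domain) (v : C.adjoint.domain),
        ((inner ℂ (-(γ ↑u) + C.adjoint v) (↑u : H₀) : ℂ) + (inner ℂ (-(C u)) (↑v : H₁) : ℂ)).re ≤ 0) ∧
      ∀ f : H₀, ∀ g : H₁, ∃ (u : C.domain) (v : C.adjoint.domain),
        (↑u : H₀) - (-(γ ↑u) + C.adjoint v) = f ∧ (↑v : H₁) - (-(C u)) = g := by
  refine ⟨fun u v => ?_, fun f g => ?_⟩
  · have hskew : (inner ℂ (C.adjoint v) (u : H₀)).re = (inner ℂ (C u) (v : H₁)).re := by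
      rw [LinearPMap.adjoint_isFormalAdjoint hdense v u]
      exact inner_re_symm (𝕜 := ℂ) _ _
    simp only [inner_add_left, inner_neg_left, Complex.add_re, Complex.neg_re, hskew]
    linarith [hγ u]
  · obtain ⟨u, hu⟩ := LinearPMap.exists_forall_inner_sub_eq_inner_sub hclosed γ hγ f g
    have hv : g - C u ∈ C.adjoint.domain := LinearPMap.mem_adjoint_domain_of_exists _ ⟨_, hu⟩
    refine ⟨u, ⟨g - C u, hv⟩, ?_, by simp⟩
    rw [LinearPMap.adjoint_apply_eq hdense ⟨g - C u, hv⟩ hu]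
    abel
end

section
/- Let H₀, H₁ be Hilbert spaces and let η ∈ L(H₀ × H₁) be a bounded operator with block decomposition η = [[η₀₀, η₀₁],[η₁₀, η₁₁]] satisfying Re η ≥ c for some c > 0. Then Re η₁₁ ≥ c, in particular η₁₁ is invertible, and the Schur complement satisfies Re(η₀₀ - η₀₁ η₁₁⁻¹ η₁₀) ≥ c. -/
/-!
Testing the form with `u = 0` gives the coercivity of `η₁₁`, and a coercive operator on a
Hilbert space is invertible. For the Schur complement `S`, test the form with `v = -η₁₁⁻¹ η₁₀ u`:
this kills the second row, so the form equals `Re ⟪S u, u⟫`, which therefore dominates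
`c (‖u‖² + ‖v‖²) ≥ c ‖u‖²`.
-/

section

open ContinuousLinearMap

variable {𝕜 : Type*} [RCLike 𝕜]

theorem ContinuousLinearMap.isUnit_of_forall_le_re_inner_map {E : Type*} [NormedAddCommGroup E]
    [InnerProductSpace 𝕜 E] [CompleteSpace E] (T : E →L[𝕜] E) {c : ℝ} (hc : 0 < c)
    (h : ∀ x, c * ‖x‖ ^ 2 ≤ RCLike.re (inner 𝕜 (T x) x)) : IsUnit T :=
  T.isUnit_of_forall_le_norm_inner_map (c := ⟨c, hc.le⟩) hc fun x ↦ by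
    rw [mul_comm]
    exact (h x).trans (RCLike.re_le_norm _)

theorem le_re_inner_schurComplement {H₀ H₁ : Type*} [NormedAddCommGroup H₀]
    [InnerProductSpace 𝕜 H₀] [NormedAddCommGroup H₁] [InnerProductSpace 𝕜 H₁]
    (η₀₀ : H₀ →L[𝕜] H₀) (η₀₁ : H₁ →L[𝕜] H₀) (η₁₀ : H₀ →L[𝕜] H₁) (η₁₁ inv : H₁ →L[𝕜] H₁)
    {c : ℝ} (hc : 0 ≤ c)
    (hη : ∀ u v, c * (‖u‖ ^ 2 + ‖v‖ ^ 2) ≤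
      RCLike.re (inner 𝕜 (η₀₀ u + η₀₁ v) u + inner 𝕜 (η₁₀ u + η₁₁ v) v))
    (hinv : η₁₁.comp inv = ContinuousLinearMap.id 𝕜 H₁) (u : H₀) :
    c * ‖u‖ ^ 2 ≤ RCLike.re (inner 𝕜 ((η₀₀ - η₀₁.comp (inv.comp η₁₀)) u) u) := by
  set v := -inv (η₁₀ u)
  have hrow : η₁₀ u + η₁₁ v = 0 := by
    rw [map_neg, ← comp_apply, hinv, ContinuousLinearMap.id_apply, add_neg_cancel]
  have hform : η₀₀ u + η₀₁ v = (η₀₀ - η₀₁.comp (inv.comp η₁₀)) u := by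
    rw [sub_apply, comp_apply, comp_apply, map_neg, sub_eq_add_neg]
  have htest := hη u v
  rw [hrow, hform, inner_zero_left, add_zero] at htest
  nlinarith [mul_nonneg hc (sq_nonneg ‖v‖)]

end

theorem stmt3_general {H₀ H₁ : Type*} [NormedAddCommGroup H₀] [InnerProductSpace ℂ H₀]
    [NormedAddCommGroup H₁] [InnerProductSpace ℂ H₁] [CompleteSpace H₁]
    (η₀₀ : H₀ →L[ℂ] H₀) (η₀₁ : H₁ →L[ℂ] H₀) (η₁₀ : H₀ →L[ℂ] H₁) (η₁₁ : H₁ →L[ℂ] H₁)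
    (c : ℝ) (hc : 0 < c)
    (hη : ∀ (u : H₀) (v : H₁),
      c * (‖u‖ ^ 2 + ‖v‖ ^ 2) ≤
        ((inner ℂ (η₀₀ u + η₀₁ v) u : ℂ) + (inner ℂ (η₁₀ u + η₁₁ v) v : ℂ)).re) :
    (∀ v : H₁, c * ‖v‖ ^ 2 ≤ (inner ℂ (η₁₁ v) v : ℂ).re) ∧
      ∃ inv : H₁ →L[ℂ] H₁, η₁₁.comp inv = ContinuousLinearMap.id ℂ H₁ ∧
        inv.comp η₁₁ = ContinuousLinearMap.id ℂ H₁ ∧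
        ∀ u : H₀, c * ‖u‖ ^ 2 ≤ (inner ℂ ((η₀₀ - η₀₁.comp (inv.comp η₁₀)) u) u : ℂ).re := by
  have h₁₁ : ∀ v : H₁, c * ‖v‖ ^ 2 ≤ (inner ℂ (η₁₁ v) v : ℂ).re := fun v ↦ by
    simpa using hη 0 v
  obtain ⟨U, rfl⟩ := η₁₁.isUnit_of_forall_le_re_inner_map hc h₁₁
  exact ⟨h₁₁, ↑U⁻¹, U.mul_inv, U.inv_mul,
    le_re_inner_schurComplement η₀₀ η₀₁ η₁₀ _ _ hc.le hη U.mul_inv⟩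

/-- if a bounded block operator `η = [[η₀₀, η₀₁],[η₁₀, η₁₁]]` on `H₀ × H₁`
satisfies `Re ⟪η x, x⟫ ≥ c ‖x‖²` (with the product inner product) for some `c > 0`, then
`Re η₁₁ ≥ c`, `η₁₁` is invertible, and the Schur complement satisfies
`Re (η₀₀ - η₀₁ η₁₁⁻¹ η₁₀) ≥ c`. -/
theorem stmt3 {H₀ H₁ : Type*} [NormedAddCommGroup H₀] [InnerProductSpace ℂ H₀] [CompleteSpace H₀]
    [NormedAddCommGroup H₁] [InnerProductSpace ℂ H₁] [CompleteSpace H₁]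
    (η₀₀ : H₀ →L[ℂ] H₀) (η₀₁ : H₁ →L[ℂ] H₀) (η₁₀ : H₀ →L[ℂ] H₁) (η₁₁ : H₁ →L[ℂ] H₁)
    (c : ℝ) (hc : 0 < c)
    (hη : ∀ (u : H₀) (v : H₁),
      c * (‖u‖ ^ 2 + ‖v‖ ^ 2) ≤
        ((inner ℂ (η₀₀ u + η₀₁ v) u : ℂ) + (inner ℂ (η₁₀ u + η₁₁ v) v : ℂ)).re) :
    (∀ v : H₁, c * ‖v‖ ^ 2 ≤ (inner ℂ (η₁₁ v) v : ℂ).re) ∧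
      ∃ inv : H₁ →L[ℂ] H₁, η₁₁.comp inv = ContinuousLinearMap.id ℂ H₁ ∧
        inv.comp η₁₁ = ContinuousLinearMap.id ℂ H₁ ∧
        ∀ u : H₀, c * ‖u‖ ^ 2 ≤ (inner ℂ ((η₀₀ - η₀₁.comp (inv.comp η₁₀)) u) u : ℂ).re :=
  stmt3_general η₀₀ η₀₁ η₁₀ η₁₁ c hc hη
end

section
/- Let H₀ be a Hilbert space, N ≤ H₀ a closed subspace with orthogonal complement M, with embeddings ι : M → H₀ and κ : N → H₀. Let γ ∈ L(H₀) with Re γ ≥ c for some c > 0, and let z ∈ ℂ with Re z > -c. Then z + κ*γκ is invertible on N and Re(ι*γι - ι*γκ (z + κ*γκ)⁻¹ κ*γι) ≥ min{Re z + c, c}. -/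
/-!
On `N` we have `Re ⟪(z + κ*γκ) x, x⟫ ≥ (Re z + c) ‖x‖²`, so `z + κ*γκ` is invertible by the
Lax–Milgram argument: it is bounded below, hence injective with closed range, and its range has
trivial orthogonal complement. For `u ∈ M` put `v := (z + κ*γκ)⁻¹ κ*γι u ∈ N`. Testing the
equation defining `v` against `v` and using `u ⊥ v` gives
`Re ⟪S u, u⟫ = Re ⟪γ (u - v), u - v⟫ + Re z ‖v‖² ≥ c ‖u‖² + (Re z + c) ‖v‖² ≥ c ‖u‖²`
for the Schur complement `S`.
-/

open RCLike

section Coercive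

variable {𝕜 E : Type*} [RCLike 𝕜] [NormedAddCommGroup E] [InnerProductSpace 𝕜 E]
  {T : E →L[𝕜] E} {m : ℝ}

theorem ContinuousLinearMap.norm_le_of_re_inner_ge (hm : 0 < m)
    (hT : ∀ x, m * ‖x‖ ^ 2 ≤ re (inner 𝕜 (T x) x)) (x : E) : ‖x‖ ≤ m⁻¹ * ‖T x‖ := by
  rw [inv_mul_eq_div, le_div_iff₀ hm]
  rcases (norm_nonneg x).eq_or_lt with hx | hx
  · rw [← hx, zero_mul]
    positivity
  · refine le_of_mul_le_mul_right ?_ hx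
    calc ‖x‖ * m * ‖x‖ = m * ‖x‖ ^ 2 := by ring
      _ ≤ re (inner 𝕜 (T x) x) := hT x
      _ ≤ ‖T x‖ * ‖x‖ := re_inner_le_norm (T x) x

theorem ContinuousLinearMap.antilipschitz_of_re_inner_ge (hm : 0 < m)
    (hT : ∀ x, m * ‖x‖ ^ 2 ≤ re (inner 𝕜 (T x) x)) : ∃ K, AntilipschitzWith K T :=
  ⟨_, T.antilipschitz_of_bound (K := ⟨m⁻¹, by positivity⟩) (T.norm_le_of_re_inner_ge hm hT)⟩

theorem ContinuousLinearMap.ker_eq_bot_of_re_inner_ge (hm : 0 < m)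
    (hT : ∀ x, m * ‖x‖ ^ 2 ≤ re (inner 𝕜 (T x) x)) : T.ker = ⊥ := by
  obtain ⟨_, hanti⟩ := T.antilipschitz_of_re_inner_ge hm hT
  exact LinearMap.ker_eq_bot.mpr hanti.injective

theorem ContinuousLinearMap.range_eq_top_of_re_inner_ge [CompleteSpace E] (hm : 0 < m)
    (hT : ∀ x, m * ‖x‖ ^ 2 ≤ re (inner 𝕜 (T x) x)) : T.range = ⊤ := by
  obtain ⟨_, hanti⟩ := T.antilipschitz_of_re_inner_ge hm hT
  have : CompleteSpace T.range := (hanti.isClosed_range T.uniformContinuous).completeSpace_coe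
  rw [← Submodule.orthogonal_eq_bot_iff, Submodule.eq_bot_iff]
  intro y hy
  have hTy : inner 𝕜 (T y) y = 0 :=
    Submodule.inner_right_of_mem_orthogonal (LinearMap.mem_range_self (T : E →ₗ[𝕜] E) y) hy
  have := hT y
  rw [hTy, map_zero] at this
  simpa [hm.ne'] using le_antisymm (nonpos_of_mul_nonpos_right this hm) (sq_nonneg ‖y‖)

theorem ContinuousLinearMap.exists_inverse_of_re_inner_ge [CompleteSpace E] (hm : 0 < m)
    (hT : ∀ x, m * ‖x‖ ^ 2 ≤ re (inner 𝕜 (T x) x)) :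
    ∃ S : E →L[𝕜] E, T.comp S = .id 𝕜 E ∧ S.comp T = .id 𝕜 E := by
  let e := ContinuousLinearEquiv.ofBijective T (T.ker_eq_bot_of_re_inner_ge hm hT)
    (T.range_eq_top_of_re_inner_ge hm hT)
  exact ⟨e.symm, ext e.apply_symm_apply, ext e.symm_apply_apply⟩

end Coercive

theorem re_inner_sub_ge_of_inner_eq_zero {𝕜 E : Type*} [RCLike 𝕜] [NormedAddCommGroup E]
    [InnerProductSpace 𝕜 E] {γ : E →L[𝕜] E} {c a : ℝ}
    (hγ : ∀ x, c * ‖x‖ ^ 2 ≤ re (inner 𝕜 (γ x) x)) {u v : E} (huv : inner 𝕜 u v = 0)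
    (hv : re (inner 𝕜 (γ u) v) = a * ‖v‖ ^ 2 + re (inner 𝕜 (γ v) v)) :
    c * ‖u‖ ^ 2 + (a + c) * ‖v‖ ^ 2 ≤ re (inner 𝕜 (γ u) u) - re (inner 𝕜 (γ v) u) := by
  have hnorm : ‖u - v‖ ^ 2 = ‖u‖ ^ 2 + ‖v‖ ^ 2 := by
    rw [norm_sub_sq (𝕜 := 𝕜), huv, map_zero]
    ring
  have hexpand : re (inner 𝕜 (γ (u - v)) (u - v)) = re (inner 𝕜 (γ u) u)
      - re (inner 𝕜 (γ u) v) - re (inner 𝕜 (γ v) u) + re (inner 𝕜 (γ v) v) := by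
    simp only [map_sub, inner_sub_left, inner_sub_right]
    ring
  have := hγ (u - v)
  rw [hnorm, hexpand] at this
  linarith

theorem stmt4_general {H₀ : Type*} [NormedAddCommGroup H₀] [InnerProductSpace ℂ H₀] [CompleteSpace H₀]
    (N : Submodule ℂ H₀) (hN : IsClosed (N : Set H₀))
    (γ : H₀ →L[ℂ] H₀) (c : ℝ)
    (hγ : ∀ x : H₀, c * ‖x‖ ^ 2 ≤ (inner ℂ (γ x) x : ℂ).re)
    (z : ℂ) (hz : -c < z.re)
    -- the four compressions of γ with respect to the decomposition H₀ = M ⊕ N, M := Nᗮ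
    (G_MM : ↥Nᗮ →L[ℂ] ↥Nᗮ) (G_NM : ↥N →L[ℂ] ↥Nᗮ) (G_MN : ↥Nᗮ →L[ℂ] ↥N) (G_NN : ↥N →L[ℂ] ↥N)
    (hMM : ∀ (x y : ↥Nᗮ), (inner ℂ (G_MM x) y : ℂ) = inner ℂ (γ ↑x) (↑y : H₀))
    (hNM : ∀ (x : ↥N) (y : ↥Nᗮ), (inner ℂ (G_NM x) y : ℂ) = inner ℂ (γ ↑x) (↑y : H₀))
    (hMN : ∀ (x : ↥Nᗮ) (y : ↥N), (inner ℂ (G_MN x) y : ℂ) = inner ℂ (γ ↑x) (↑y : H₀))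
    (hNN : ∀ (x y : ↥N), (inner ℂ (G_NN x) y : ℂ) = inner ℂ (γ ↑x) (↑y : H₀)) :
    ∃ inv : ↥N →L[ℂ] ↥N,
      (z • ContinuousLinearMap.id ℂ ↥N + G_NN).comp inv = ContinuousLinearMap.id ℂ ↥N ∧
      inv.comp (z • ContinuousLinearMap.id ℂ ↥N + G_NN) = ContinuousLinearMap.id ℂ ↥N ∧
      ∀ u : ↥Nᗮ, min (z.re + c) c * ‖u‖ ^ 2 ≤
        (inner ℂ ((G_MM - G_NM.comp (inv.comp G_MN)) u) u : ℂ).re := by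
  have : CompleteSpace N := hN.completeSpace_coe
  set T := z • ContinuousLinearMap.id ℂ ↥N + G_NN
  have hT : ∀ x : N,
      (inner ℂ (T x) x).re = z.re * ‖x‖ ^ 2 + (inner ℂ (γ x) (x : H₀)).re := by
    intro x
    simp [T, hNN, ← Complex.ofReal_pow, mul_comm]
  have hTcoercive : ∀ x : N, (z.re + c) * ‖x‖ ^ 2 ≤ re (inner ℂ (T x) x) := fun x ↦ by
    have := hγ x
    rw [Submodule.norm_coe] at this
    rw [re_to_complex, hT]
    linarith
  obtain ⟨inv, hTinv, hinvT⟩ := T.exists_inverse_of_re_inner_ge (by linarith) hTcoercive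
  refine ⟨inv, hTinv, hinvT, fun u ↦ ?_⟩
  set v := inv (G_MN u)
  have hv : (inner ℂ (γ u) (v : H₀)).re =
      z.re * ‖(v : H₀)‖ ^ 2 + (inner ℂ (γ v) (v : H₀)).re := by
    have hTv : T v = G_MN u := DFunLike.congr_fun hTinv (G_MN u)
    rw [← hMN, ← hTv, hT, Submodule.norm_coe]
  have huv : inner ℂ (u : H₀) v = 0 := Submodule.inner_left_of_mem_orthogonal v.2 u.2
  have hschur := re_inner_sub_ge_of_inner_eq_zero hγ huv hv
  calc min (z.re + c) c * ‖u‖ ^ 2 ≤ c * ‖u‖ ^ 2 := by gcongr; exact min_le_right _ _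
    _ ≤ c * ‖u‖ ^ 2 + (z.re + c) * ‖(v : H₀)‖ ^ 2 := by
      have : 0 ≤ z.re + c := by linarith
      exact le_add_of_nonneg_right (by positivity)
    _ ≤ _ := hschur
    _ = _ := by simp [hMM, hNM, v]

/-- Let `N ≤ H₀` be a closed subspace with orthogonal complement `M = Nᗮ`,
`ι : M → H₀`, `κ : N → H₀` the embeddings. The compressed operators
`ι*γι, ι*γκ, κ*γι, κ*γκ` are characterized by `⟪ι*γκ x, y⟫ = ⟪γ x, y⟫` etc. If
`Re γ ≥ c > 0` and `Re z > -c` then `z + κ*γκ` is invertible on `N` and the Schur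
complement `ι*γι - ι*γκ (z + κ*γκ)⁻¹ κ*γι` satisfies `Re ≥ min (Re z + c) c` on `M`. -/
theorem stmt4 {H₀ : Type*} [NormedAddCommGroup H₀] [InnerProductSpace ℂ H₀] [CompleteSpace H₀]
    (N : Submodule ℂ H₀) (hN : IsClosed (N : Set H₀))
    (γ : H₀ →L[ℂ] H₀) (c : ℝ) (hc : 0 < c)
    (hγ : ∀ x : H₀, c * ‖x‖ ^ 2 ≤ (inner ℂ (γ x) x : ℂ).re)
    (z : ℂ) (hz : -c < z.re)
    -- the four compressions of γ with respect to the decomposition H₀ = M ⊕ N, M := Nᗮ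
    (G_MM : ↥Nᗮ →L[ℂ] ↥Nᗮ) (G_NM : ↥N →L[ℂ] ↥Nᗮ) (G_MN : ↥Nᗮ →L[ℂ] ↥N) (G_NN : ↥N →L[ℂ] ↥N)
    (hMM : ∀ (x y : ↥Nᗮ), (inner ℂ (G_MM x) y : ℂ) = inner ℂ (γ ↑x) (↑y : H₀))
    (hNM : ∀ (x : ↥N) (y : ↥Nᗮ), (inner ℂ (G_NM x) y : ℂ) = inner ℂ (γ ↑x) (↑y : H₀))
    (hMN : ∀ (x : ↥Nᗮ) (y : ↥N), (inner ℂ (G_MN x) y : ℂ) = inner ℂ (γ ↑x) (↑y : H₀))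
    (hNN : ∀ (x y : ↥N), (inner ℂ (G_NN x) y : ℂ) = inner ℂ (γ ↑x) (↑y : H₀)) :
    ∃ inv : ↥N →L[ℂ] ↥N,
      (z • ContinuousLinearMap.id ℂ ↥N + G_NN).comp inv = ContinuousLinearMap.id ℂ ↥N ∧
      inv.comp (z • ContinuousLinearMap.id ℂ ↥N + G_NN) = ContinuousLinearMap.id ℂ ↥N ∧
      ∀ u : ↥Nᗮ, min (z.re + c) c * ‖u‖ ^ 2 ≤
        (inner ℂ ((G_MM - G_NM.comp (inv.comp G_MN)) u) u : ℂ).re :=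
  stmt4_general N hN γ c hγ z hz G_MM G_NM G_MN G_NN hMM hNM hMN hNN
end

section
/- Let H₀, H₁ be Hilbert spaces, γ ∈ L(H₀) with Re γ ≥ c > 0, and C : dom(C) ⊆ H₀ → H₁ densely defined, closed, injective, and surjective. Let δ > 0 and z ∈ ℂ \ {0}. Then for all (u, v) ∈ H₀ × H₁: Re⟨[[γ - δ, (γ - δ)δ C⁻¹],[0, δ]](u,v), (u,v)⟩ ≥ (c - δ(1 + ½((‖γ‖ + δ)‖C⁻¹‖)²))‖u‖² + (δ/2)‖v‖². -/
/-!
The diagonal entries contribute at least `(c - δ)‖u‖² + δ‖v‖²`, while the off-diagonal term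
`δ Re⟪(γ - δ) C⁻¹ v, u⟫` is at least `-δ K ‖v‖ ‖u‖` with `K = (‖γ‖ + δ)‖C⁻¹‖`; Young's inequality
`2 (K‖u‖) ‖v‖ ≤ (K‖u‖)² + ‖v‖²` absorbs it at the cost of `δ K²/2 ‖u‖²` and half of `δ‖v‖²`.
-/

section
variable {E F : Type*} [NormedAddCommGroup E] [InnerProductSpace ℂ E]
  [NormedAddCommGroup F] [InnerProductSpace ℂ F]

lemma re_inner_ofReal_smul_left (r : ℝ) (x y : E) :
    (inner ℂ ((r : ℂ) • x) y).re = r * (inner ℂ x y).re := by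
  rw [inner_smul_left, Complex.conj_ofReal, Complex.re_ofReal_mul]

lemma re_inner_self_eq_norm_sq (x : E) : (inner ℂ x x).re = ‖x‖ ^ 2 :=
  inner_self_eq_norm_sq (𝕜 := ℂ) x

lemma neg_opNorm_mul_le_re_inner_apply (S : F →L[ℂ] E) (v : F) (u : E) :
    -(‖S‖ * ‖v‖ * ‖u‖) ≤ (inner ℂ (S v) u).re := by
  refine neg_le_of_abs_le ((Complex.abs_re_le_norm _).trans ?_)
  exact (norm_inner_le_norm _ _).trans (by gcongr; exact S.le_opNorm v)

lemma norm_sub_ofReal_smul_id_le (T : E →L[ℂ] E) {δ : ℝ} (hδ : 0 ≤ δ) :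
    ‖T - (δ : ℂ) • ContinuousLinearMap.id ℂ E‖ ≤ ‖T‖ + δ := by
  refine (norm_sub_le _ _).trans (add_le_add_right ?_ _)
  rw [norm_smul, Complex.norm_real, Real.norm_of_nonneg hδ]
  exact mul_le_of_le_one_right hδ ContinuousLinearMap.norm_id_le

lemma re_inner_sub_ofReal_smul_id_apply_self (T : E →L[ℂ] E) (δ : ℝ) (x : E) :
    (inner ℂ ((T - (δ : ℂ) • ContinuousLinearMap.id ℂ E) x) x).re =
      (inner ℂ (T x) x).re - δ * ‖x‖ ^ 2 := by
  rw [sub_apply, inner_sub_left, Complex.sub_re,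
    smul_apply, ContinuousLinearMap.id_apply, re_inner_ofReal_smul_left,
    re_inner_self_eq_norm_sq]
end

theorem stmt6_general {H₀ H₁ : Type*} [NormedAddCommGroup H₀] [InnerProductSpace ℂ H₀]
    [NormedAddCommGroup H₁] [InnerProductSpace ℂ H₁]
    (γ : H₀ →L[ℂ] H₀) (c : ℝ)
    (hγ : ∀ x : H₀, c * ‖x‖ ^ 2 ≤ (inner ℂ (γ x) x : ℂ).re)
    (Cinv : H₁ →L[ℂ] H₀)
    (δ : ℝ) (hδ : 0 < δ) :
    ∀ (u : H₀) (v : H₁),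
      (c - δ * (1 + (1 / 2) * ((‖γ‖ + δ) * ‖Cinv‖) ^ 2)) * ‖u‖ ^ 2 + (δ / 2) * ‖v‖ ^ 2 ≤
        ((inner ℂ ((γ - (δ : ℂ) • ContinuousLinearMap.id ℂ H₀) u
            + (δ : ℂ) • ((γ - (δ : ℂ) • ContinuousLinearMap.id ℂ H₀) (Cinv v))) u : ℂ)
          + (inner ℂ ((δ : ℂ) • v) v : ℂ)).re := by
  intro u v
  set A := γ - (δ : ℂ) • ContinuousLinearMap.id ℂ H₀
  set K := (‖γ‖ + δ) * ‖Cinv‖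
  have hdiag : (c - δ) * ‖u‖ ^ 2 ≤ (inner ℂ (A u) u).re := by
    rw [re_inner_sub_ofReal_smul_id_apply_self]
    linarith [hγ u]
  have hcomp : ‖A.comp Cinv‖ ≤ K :=
    (A.opNorm_comp_le Cinv).trans
      (mul_le_mul_of_nonneg_right (norm_sub_ofReal_smul_id_le γ hδ.le) (norm_nonneg _))
  have hcross : -(K * ‖v‖ * ‖u‖) ≤ (inner ℂ (A (Cinv v)) u).re :=
    (neg_le_neg (by gcongr)).trans (neg_opNorm_mul_le_re_inner_apply (A.comp Cinv) v u)
  have hyoung : 2 * (K * ‖u‖) * ‖v‖ ≤ (K * ‖u‖) ^ 2 + ‖v‖ ^ 2 := two_mul_le_add_sq _ _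
  rw [inner_add_left, Complex.add_re, Complex.add_re, re_inner_ofReal_smul_left,
    re_inner_ofReal_smul_left, re_inner_self_eq_norm_sq]
  linarith [mul_le_mul_of_nonneg_left hcross hδ.le, mul_le_mul_of_nonneg_left hyoung hδ.le]

/-- for `Re γ ≥ c > 0`, `C` densely defined, closed, bijective with bounded
inverse `Cinv`, `δ > 0` and `z ∈ ℂ \ {0}`, the bounded block operator
`[[γ - δ, (γ - δ) δ C⁻¹],[0, δ]] : (u,v) ↦ ((γ-δ)u + δ (γ-δ)(C⁻¹ v), δ v)` satisfies the
real-part lower bound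
`Re ⟪·(u,v), (u,v)⟫ ≥ (c - δ(1 + ½((‖γ‖+δ)‖C⁻¹‖)²))‖u‖² + (δ/2)‖v‖²`. -/
theorem stmt6 {H₀ H₁ : Type*} [NormedAddCommGroup H₀] [InnerProductSpace ℂ H₀] [CompleteSpace H₀]
    [NormedAddCommGroup H₁] [InnerProductSpace ℂ H₁] [CompleteSpace H₁]
    (γ : H₀ →L[ℂ] H₀) (c : ℝ) (hc : 0 < c)
    (hγ : ∀ x : H₀, c * ‖x‖ ^ 2 ≤ (inner ℂ (γ x) x : ℂ).re)
    (C : H₀ →ₗ.[ℂ] H₁) (hdense : Dense (C.domain : Set H₀)) (hclosed : C.IsClosed)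
    (Cinv : H₁ →L[ℂ] H₀)
    (hCinv₁ : ∀ u : C.domain, Cinv (C u) = ↑u)
    (hCinv₂ : ∀ g : H₁, ∃ h : Cinv g ∈ C.domain, C ⟨Cinv g, h⟩ = g)
    (δ : ℝ) (hδ : 0 < δ) (z : ℂ) (hz : z ≠ 0) :
    ∀ (u : H₀) (v : H₁),
      (c - δ * (1 + (1 / 2) * ((‖γ‖ + δ) * ‖Cinv‖) ^ 2)) * ‖u‖ ^ 2 + (δ / 2) * ‖v‖ ^ 2 ≤
        ((inner ℂ ((γ - (δ : ℂ) • ContinuousLinearMap.id ℂ H₀) u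
            + (δ : ℂ) • ((γ - (δ : ℂ) • ContinuousLinearMap.id ℂ H₀) (Cinv v))) u : ℂ)
          + (inner ℂ ((δ : ℂ) • v) v : ℂ)).re :=
  stmt6_general γ c hγ Cinv δ hδ
end

section
/- Let H₀, H₁ be Hilbert spaces, γ ∈ L(H₀) with Re γ ≥ c > 0, and C : dom(C) ⊆ H₀ → H₁ densely defined, closed, injective and surjective. Define B := -[[γ, 0],[0, 0]] - [[0, -C*],[C, 0]] on dom(C) × dom(C*). Then there exists δ > 0 such that {z ∈ ℂ : Re z > -δ} ⊆ ρ(B) and sup{‖(z - B)⁻¹‖ : Re z > -δ} < ∞. -/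
/-!
Since `C` is closed and bijective, `J := C⁻¹` is bounded, and then `J†` is a bounded inverse of
`C*`. Writing `u = J a`, `v = J† b` and `(f, g) = (z - B)(u, v)` turns `z - B` into a system of
bounded operators. Testing it against `(u, v)`, the real part gives
`Re z (‖u‖² + ‖v‖²) + c ‖u‖² ≤ ‖u‖ ‖f‖ + ‖v‖ ‖g‖` and the imaginary part controls
`Im z (‖u‖² - ‖v‖²)`; together with the trivial bounds through `J` for small `|z|` this gives a
uniform a priori estimate on a half plane `Re z > -δ`. Eliminating `a` leaves the Schur complement
`1 + z (z + γ) J J†` on `H₀`, which the estimate makes bounded below; its adjoint is injective by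
the same estimate for `(conj z, γ†)`, so it is invertible.
-/

open scoped ComplexConjugate ComplexInnerProductSpace InnerProduct

namespace LinearPMap

variable {𝕜 E F : Type*} [NontriviallyNormedField 𝕜] [NormedAddCommGroup E] [NormedSpace 𝕜 E]
  [NormedAddCommGroup F] [NormedSpace 𝕜 F]

structure IsInverse (C : E →ₗ.[𝕜] F) (J : F →L[𝕜] E) : Prop where
  mem_domain : ∀ a, J a ∈ C.domain
  apply_mk : ∀ a, C ⟨J a, mem_domain a⟩ = a
  inverse_apply : ∀ u : C.domain, J (C u) = u

theorem IsClosed.exists_isInverse [CompleteSpace E] [CompleteSpace F] {C : E →ₗ.[𝕜] F}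
    (hC : C.IsClosed) (hbij : Function.Bijective C) : ∃ J, C.IsInverse J := by
  let e := LinearEquiv.ofBijective C.toFun hbij
  let J : F →ₗ[𝕜] E := C.domain.subtype ∘ₗ e.symm.toLinearMap
  have hgraph : (J.graph : Set (F × E)) = Prod.swap ⁻¹' C.graph := by
    ext ⟨g, x⟩
    simp only [Set.mem_preimage, SetLike.mem_coe, LinearMap.mem_graph_iff, mem_graph_iff,
      Prod.swap_prod_mk]
    constructor
    · rintro rfl
      exact ⟨e.symm g, rfl, e.apply_symm_apply g⟩
    · rintro ⟨u, rfl, rfl⟩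
      exact (congrArg Subtype.val (e.symm_apply_apply u)).symm
  have hJ : Continuous J := J.continuous_of_isClosed_graph (hgraph ▸ hC.preimage continuous_swap)
  exact ⟨⟨J, hJ⟩, fun a => (e.symm a).2, fun a => e.apply_symm_apply a,
    fun u => congrArg Subtype.val (e.symm_apply_apply u)⟩

end LinearPMap

theorem LinearPMap.IsInverse.adjoint {𝕜 E F : Type*} [RCLike 𝕜] [NormedAddCommGroup E]
    [InnerProductSpace 𝕜 E] [CompleteSpace E] [NormedAddCommGroup F] [InnerProductSpace 𝕜 F]
    [CompleteSpace F] {C : E →ₗ.[𝕜] F} {J : F →L[𝕜] E} (hJ : C.IsInverse J)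
    (hC : Dense (C.domain : Set E)) : C.adjoint.IsInverse (J†) := by
  have hinner (w : E) (x : C.domain) : inner 𝕜 w (x : E) = inner 𝕜 ((J†) w) (C x) := by
    rw [ContinuousLinearMap.adjoint_inner_left, hJ.inverse_apply]
  refine ⟨fun w => LinearPMap.mem_adjoint_domain_of_exists _ ⟨w, hinner w⟩,
    fun w => LinearPMap.adjoint_apply_eq hC _ (hinner w), fun v => ext_inner_left 𝕜 fun g => ?_⟩
  rw [ContinuousLinearMap.adjoint_inner_right, ← inner_conj_symm,
    LinearPMap.adjoint_isFormalAdjoint hC v ⟨J g, hJ.mem_domain g⟩, hJ.apply_mk, inner_conj_symm]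

lemma add_le_of_sq_add_sq_le {x y s t κ : ℝ} (hx : 0 ≤ x) (hy : 0 ≤ y) (hs : 0 ≤ s) (ht : 0 ≤ t)
    (hκ : 0 ≤ κ) (h : x ^ 2 + y ^ 2 ≤ κ * (x * s + y * t)) : x + y ≤ 2 * κ * (s + t) := by
  have hP : x * s + y * t ≤ (x + y) * (s + t) := by nlinarith
  have hsq : (x + y) ^ 2 ≤ 2 * κ * (s + t) * (x + y) := by nlinarith [sq_nonneg (x - y)]
  nlinarith [mul_nonneg hκ (add_nonneg hs ht)]

lemma sq_add_sq_le_of_le_abs_im {c r G δ p q x y s t : ℝ} (hc : 0 < c) (hG : 0 ≤ G)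
    (hδ : 0 ≤ δ) (hδr : δ ≤ r / 2) (hδc : δ * (4 * (r + G)) ≤ c * r) (hp : -δ < p)
    (hq : r / 2 ≤ |q|) (hx : 0 ≤ x) (hy : 0 ≤ y) (hs : 0 ≤ s) (ht : 0 ≤ t)
    (hre : p * (x ^ 2 + y ^ 2) + c * x ^ 2 ≤ x * s + y * t)
    (him : |q| * |x ^ 2 - y ^ 2| ≤ x * s + y * t + G * x ^ 2) :
    c * r * (x ^ 2 + y ^ 2) ≤ (8 * (r + G) + 2 * c) * (x * s + y * t) := by
  set P := x * s + y * t
  have hP : 0 ≤ P := by positivity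
  have hdiff : r * (y ^ 2 - x ^ 2) ≤ 2 * (P + G * x ^ 2) := by
    have h1 : y ^ 2 - x ^ 2 ≤ |x ^ 2 - y ^ 2| := by rw [abs_sub_comm]; exact le_abs_self _
    nlinarith [abs_nonneg (x ^ 2 - y ^ 2)]
  have hsum : r * (x ^ 2 + y ^ 2) ≤ 2 * (r + G) * x ^ 2 + 2 * P := by nlinarith
  have hx2 : c * x ^ 2 ≤ P + δ * (x ^ 2 + y ^ 2) := by nlinarith [sq_nonneg x, sq_nonneg y]
  have hcx : c * x ^ 2 ≤ 4 * P := by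
    have : c * r * x ^ 2 ≤ r * P + δ * (2 * (r + G) * x ^ 2 + 2 * P) := by nlinarith
    nlinarith [sq_nonneg x]
  nlinarith

lemma add_le_of_mutual_le {r G L x y s t ρ : ℝ} (hr : 0 < r) (hr1 : r ≤ 1) (hG : 0 ≤ G) (hL : 0 ≤ L)
    (hrL : L ^ 2 * r * (1 + G) ≤ 1 / 2) (hρ : ρ ≤ r)
    (hx : 0 ≤ x) (hy : 0 ≤ y) (hs : 0 ≤ s) (ht : 0 ≤ t)
    (hxle : x ≤ L * (t + ρ * y)) (hyle : y ≤ L * ((ρ + G) * x + s)) :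
    x + y ≤ ((2 * L + 1) * (1 + L * (r + G)) + L) * (s + t) := by
  have hyle' : y ≤ L * (r + G) * x + L * s := by
    have : L * ((ρ + G) * x + s) ≤ L * ((r + G) * x + s) := by gcongr
    linarith
  have hxle' : x ≤ L * t + L * r * y := by
    have : L * (t + ρ * y) ≤ L * (t + r * y) := by gcongr
    linarith
  have hx' : x ≤ (2 * L + 1) * (s + t) := by
    have h1 : x ≤ L * t + L ^ 2 * r * (r + G) * x + L ^ 2 * r * s := by
      nlinarith [mul_le_mul_of_nonneg_left hyle' (by positivity : 0 ≤ L * r)]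
    have h2 : L ^ 2 * r * (r + G) ≤ 1 / 2 := le_trans (by gcongr) hrL
    have h3 : L ^ 2 * r ≤ 1 / 2 :=
      le_trans (le_mul_of_one_le_right (by positivity) (by linarith)) hrL
    nlinarith [mul_le_mul_of_nonneg_right h2 hx, mul_le_mul_of_nonneg_right h3 hs]
  have : L * (r + G) * x ≤ L * (r + G) * ((2 * L + 1) * (s + t)) := by gcongr
  nlinarith

/-- `x, y, s, t` stand for `‖u‖, ‖v‖, ‖f‖, ‖g‖`; the proof treats the regions `Re z ≥ r / 2`,
`|Im z| ≥ r / 2` and `|z| ≤ r` separately. -/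
theorem exists_add_le_of_estimates {c G L : ℝ} (hc : 0 < c) (hG : 0 ≤ G) (hL : 0 ≤ L) :
    ∃ δ > 0, ∃ K ≥ 0, ∀ z : ℂ, -δ < z.re → ∀ {x y s t : ℝ}, 0 ≤ x → 0 ≤ y → 0 ≤ s → 0 ≤ t →
      z.re * (x ^ 2 + y ^ 2) + c * x ^ 2 ≤ x * s + y * t →
      |z.im| * |x ^ 2 - y ^ 2| ≤ x * s + y * t + G * x ^ 2 →
      x ≤ L * (t + ‖z‖ * y) → y ≤ L * ((‖z‖ + G) * x + s) →
      x + y ≤ K * (s + t) := by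
  set r := 1 / (2 * (L ^ 2 + 1) * (1 + G))
  have hr : 0 < r := by positivity
  have hr1 : r ≤ 1 := by
    rw [div_le_one (by positivity)]
    nlinarith [sq_nonneg L]
  have hrL : L ^ 2 * r * (1 + G) ≤ 1 / 2 := by
    have : L ^ 2 * r * (1 + G) = L ^ 2 / (2 * (L ^ 2 + 1)) := by simp only [r]; field_simp
    rw [this, div_le_iff₀ (by positivity)]
    linarith
  set δ := min (r / 2) (c * r / (4 * (r + G)))
  have hδ : 0 < δ := by positivity
  have hδc : δ * (4 * (r + G)) ≤ c * r :=
    (le_div_iff₀ (by positivity)).1 (min_le_right _ _)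
  set κ := (8 * (r + G) + 2 * c) / (c * r)
  set K := max (2 * (2 / r)) (max (2 * κ) ((2 * L + 1) * (1 + L * (r + G)) + L))
  refine ⟨δ, hδ, K, le_max_of_le_left (by positivity),
    fun z hz x y s t hx hy hs ht hre him hxle hyle => ?_⟩
  have hst : 0 ≤ s + t := add_nonneg hs ht
  by_cases hzre : r / 2 ≤ z.re
  · have h : x ^ 2 + y ^ 2 ≤ 2 / r * (x * s + y * t) := by
      rw [div_mul_eq_mul_div, le_div_iff₀ hr]
      nlinarith [sq_nonneg x, sq_nonneg y]
    exact (add_le_of_sq_add_sq_le hx hy hs ht (by positivity) h).trans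
      (mul_le_mul_of_nonneg_right (le_max_left _ _) hst)
  by_cases hzim : r / 2 ≤ |z.im|
  · have h : x ^ 2 + y ^ 2 ≤ κ * (x * s + y * t) := by
      rw [div_mul_eq_mul_div, le_div_iff₀ (by positivity), mul_comm]
      exact sq_add_sq_le_of_le_abs_im hc hG hδ.le (min_le_left _ _) hδc hz hzim hx hy hs ht
        hre him
    exact (add_le_of_sq_add_sq_le hx hy hs ht (by positivity) h).trans
      (mul_le_mul_of_nonneg_right (le_max_of_le_right (le_max_left _ _)) hst)
  have hz : ‖z‖ ≤ r := by
    have : |z.re| ≤ r / 2 := abs_le.2 ⟨by linarith [min_le_left (r / 2) (c * r / (4 * (r + G)))],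
      by linarith⟩
    linarith [Complex.norm_le_abs_re_add_abs_im z]
  exact (add_le_of_mutual_le hr hr1 hG hL hrL hz hx hy hs ht hxle hyle).trans
    (mul_le_mul_of_nonneg_right (le_max_of_le_right (le_max_right _ _)) hst)

lemma Complex.re_inner_self {E : Type*} [NormedAddCommGroup E] [InnerProductSpace ℂ E] (x : E) :
    (⟪x, x⟫).re = ‖x‖ ^ 2 := by
  simpa using inner_self_eq_norm_sq (𝕜 := ℂ) x

lemma Complex.im_inner_self {E : Type*} [NormedAddCommGroup E] [InnerProductSpace ℂ E] (x : E) :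
    (⟪x, x⟫).im = 0 := by
  simpa using inner_self_im (𝕜 := ℂ) x

section

variable {H₀ H₁ : Type*} [NormedAddCommGroup H₀] [InnerProductSpace ℂ H₀] [CompleteSpace H₀]
  [NormedAddCommGroup H₁] [InnerProductSpace ℂ H₁] [CompleteSpace H₁]

lemma re_inner_add_re_inner (J : H₁ →L[ℂ] H₀) (γ : H₀ →L[ℂ] H₀) (z : ℂ) (a : H₁) (b : H₀) :
    (⟪z • J a + γ (J a) - b, J a⟫).re + (⟪z • (J†) b + a, (J†) b⟫).re =
      z.re * (‖J a‖ ^ 2 + ‖(J†) b‖ ^ 2) + (⟪γ (J a), J a⟫).re := by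
  have h : (⟪a, (J†) b⟫).re = (⟪b, J a⟫).re := by
    rw [ContinuousLinearMap.adjoint_inner_right, ← inner_conj_symm, Complex.conj_re]
  simp only [inner_add_left, inner_sub_left, inner_smul_left, Complex.add_re, Complex.sub_re,
    Complex.mul_re, Complex.conj_re, Complex.conj_im, Complex.re_inner_self,
    Complex.im_inner_self, h]
  ring

lemma im_inner_sub_im_inner (J : H₁ →L[ℂ] H₀) (γ : H₀ →L[ℂ] H₀) (z : ℂ) (a : H₁) (b : H₀) :
    (⟪z • J a + γ (J a) - b, J a⟫).im - (⟪z • (J†) b + a, (J†) b⟫).im =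
      -z.im * (‖J a‖ ^ 2 - ‖(J†) b‖ ^ 2) + (⟪γ (J a), J a⟫).im := by
  have h : (⟪a, (J†) b⟫).im = -(⟪b, J a⟫).im := by
    rw [ContinuousLinearMap.adjoint_inner_right, ← inner_conj_symm, Complex.conj_im]
  simp only [inner_add_left, inner_sub_left, inner_smul_left, Complex.add_im, Complex.sub_im,
    Complex.mul_im, Complex.conj_re, Complex.conj_im, Complex.re_inner_self,
    Complex.im_inner_self, h]
  ring

/-- With `(u, v) = (J a, J† b)`, i.e. `C u = a` and `C* v = b` when `J = C⁻¹`, the right-hand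
side is `K` times the norm of `(z - B)(u, v)`. -/
def ResolventBound (J : H₁ →L[ℂ] H₀) (γ : H₀ →L[ℂ] H₀) (z : ℂ) (K : ℝ) : Prop :=
  ∀ a b, ‖J a‖ + ‖(J†) b‖ ≤ K * (‖z • J a + γ (J a) - b‖ + ‖z • (J†) b + a‖)

theorem exists_resolventBound (J : H₁ →L[ℂ] H₀) {c G : ℝ} (hc : 0 < c) (hG : 0 ≤ G) :
    ∃ δ > 0, ∃ K ≥ 0, ∀ γ : H₀ →L[ℂ] H₀, ‖γ‖ ≤ G → (∀ x, c * ‖x‖ ^ 2 ≤ (⟪γ x, x⟫).re) →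
      ∀ z : ℂ, -δ < z.re → ResolventBound J γ z K := by
  obtain ⟨δ, hδ, K, hK, hest⟩ := exists_add_le_of_estimates hc hG (norm_nonneg J)
  refine ⟨δ, hδ, K, hK, fun γ hγG hγ z hz a b => ?_⟩
  set u := J a
  set v := (J†) b
  set f := z • u + γ u - b
  set g := z • v + a
  have hγu : ‖γ u‖ * ‖u‖ ≤ G * ‖u‖ ^ 2 := by
    rw [sq, ← mul_assoc]
    exact mul_le_mul_of_nonneg_right (γ.le_of_opNorm_le hγG u) (norm_nonneg u)
  refine hest z hz (norm_nonneg u) (norm_nonneg v) (norm_nonneg f) (norm_nonneg g) ?_ ?_ ?_ ?_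
  · have hf := abs_le.1 ((Complex.abs_re_le_norm _).trans (norm_inner_le_norm f u))
    have hg := abs_le.1 ((Complex.abs_re_le_norm _).trans (norm_inner_le_norm g v))
    linarith [re_inner_add_re_inner J γ z a b, hγ u]
  · have hf := abs_le.1 ((Complex.abs_im_le_norm _).trans (norm_inner_le_norm f u))
    have hg := abs_le.1 ((Complex.abs_im_le_norm _).trans (norm_inner_le_norm g v))
    have hγ := abs_le.1 ((Complex.abs_im_le_norm _).trans (norm_inner_le_norm (γ u) u))
    rw [← abs_mul, ← abs_neg, ← neg_mul, abs_le]
    constructor <;> linarith [im_inner_sub_im_inner J γ z a b]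
  · calc ‖u‖ = ‖J (g - z • v)‖ := by simp only [u, g, add_sub_cancel_left]
      _ ≤ ‖J‖ * (‖g‖ + ‖z‖ * ‖v‖) := by
        grw [J.le_opNorm, norm_sub_le, norm_smul]
  · calc ‖v‖ = ‖(J†) (z • u + γ u - f)‖ := by simp only [v, f, sub_sub_cancel]
      _ ≤ ‖J‖ * ((‖z‖ + G) * ‖u‖ + ‖f‖) := by
        grw [(J†).le_opNorm, LinearIsometryEquiv.norm_map, norm_sub_le, norm_add_le, norm_smul,
          γ.le_of_opNorm_le hγG u]
        exact le_of_eq (by ring)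

/-- Eliminating `a = g - z J† b` from `(z - B)(J a, J† b) = (f, g)` leaves
`schurComplement J γ z b = (z + γ) J g - f`. -/
noncomputable def schurComplement (J : H₁ →L[ℂ] H₀) (γ : H₀ →L[ℂ] H₀) (z : ℂ) : H₀ →L[ℂ] H₀ :=
  1 + z • ((z • 1 + γ) ∘L J ∘L J†)

variable {J : H₁ →L[ℂ] H₀} {γ : H₀ →L[ℂ] H₀} {z : ℂ} {K K' : ℝ}

theorem ResolventBound.apply_eq (h : ResolventBound J γ z K) {a a' : H₁} {b b' : H₀}
    (hf : z • J a + γ (J a) - b = z • J a' + γ (J a') - b')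
    (hg : z • (J†) b + a = z • (J†) b' + a') : J a = J a' ∧ (J†) b = (J†) b' := by
  have hf' : z • J (a - a') + γ (J (a - a')) - (b - b') = 0 := by
    simp only [map_sub]
    linear_combination (norm := module) hf
  have hg' : z • (J†) (b - b') + (a - a') = 0 := by
    simp only [map_sub]
    linear_combination (norm := module) hg
  have h0 := h (a - a') (b - b')
  simp only [hf', hg', norm_zero, add_zero, mul_zero] at h0
  constructor <;> rw [← sub_eq_zero, ← map_sub, ← norm_le_zero_iff] <;>
    linarith [norm_nonneg (J (a - a')), norm_nonneg ((J†) (b - b'))]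

theorem schurComplement_apply (b : H₀) :
    schurComplement J γ z b = b + z • (z • J ((J†) b) + γ (J ((J†) b))) := by
  simp [schurComplement]

theorem adjoint_schurComplement_apply (x : H₀) :
    ((schurComplement J γ z)†) x = x + conj z • J ((J†) (conj z • x + (γ†) x)) := by
  refine ext_inner_left ℂ fun y => ?_
  simp only [ContinuousLinearMap.adjoint_inner_right, schurComplement_apply, inner_add_left,
    inner_add_right, inner_smul_left, inner_smul_right]
  rw [← ContinuousLinearMap.adjoint_inner_left J, ContinuousLinearMap.adjoint_inner_right J,
    inner_add_right, inner_smul_right, ContinuousLinearMap.adjoint_inner_right γ]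

theorem ResolventBound.norm_le_schurComplement (h : ResolventBound J γ z K) (b : H₀) :
    ‖b‖ ≤ (1 + (‖z‖ + ‖γ‖) * K) * ‖schurComplement J γ z b‖ := by
  set u := J (-(z • (J†) b))
  have hf : z • u + γ u - b = -schurComplement J γ z b := by
    simp only [u, schurComplement_apply, map_neg, map_smul]
    module
  have hu : ‖u‖ ≤ K * ‖schurComplement J γ z b‖ := by
    have := h (-(z • (J†) b)) b
    rw [hf, show z • (J†) b + -(z • (J†) b) = 0 by abel, norm_neg, norm_zero, add_zero] at this
    linarith [norm_nonneg ((J†) b)]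
  calc ‖b‖ = ‖schurComplement J γ z b + (z • u + γ u)‖ := by
        congr 1
        linear_combination (norm := module) -hf
    _ ≤ ‖schurComplement J γ z b‖ + (‖z‖ + ‖γ‖) * ‖u‖ := by
        grw [norm_add_le, norm_add_le, norm_smul, γ.le_opNorm]
        linarith
    _ ≤ (1 + (‖z‖ + ‖γ‖) * K) * ‖schurComplement J γ z b‖ := by
        grw [hu]
        linarith

theorem ResolventBound.ker_schurComplement (h : ResolventBound J γ z K) :
    (schurComplement J γ z).ker = ⊥ :=
  LinearMap.ker_eq_bot'.2 fun b (hb : schurComplement J γ z b = 0) => norm_le_zero_iff.1 <| by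
    simpa [hb] using h.norm_le_schurComplement b

theorem ResolventBound.isClosed_range_schurComplement (h : ResolventBound J γ z K) :
    IsClosed ((schurComplement J γ z).range : Set H₀) := by
  have hanti : AntilipschitzWith (1 + (‖z‖ + ‖γ‖) * K).toNNReal (schurComplement J γ z) :=
    (schurComplement J γ z).antilipschitz_of_bound fun b =>
      (h.norm_le_schurComplement b).trans (by gcongr; exact Real.le_coe_toNNReal _)
  exact hanti.isClosed_range (schurComplement J γ z).uniformContinuous

theorem ResolventBound.ker_adjoint_schurComplement
    (h : ResolventBound J (γ†) (conj z) K') : ((schurComplement J γ z)†).ker = ⊥ := by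
  refine LinearMap.ker_eq_bot'.2 fun x (hx : ((schurComplement J γ z)†) x = 0) => ?_
  have hy : schurComplement J (γ†) (conj z) (conj z • x + (γ†) x) =
      conj z • ((schurComplement J γ z)†) x + (γ†) (((schurComplement J γ z)†) x) := by
    simp only [schurComplement_apply, adjoint_schurComplement_apply, map_add, map_smul]
    module
  rw [hx, smul_zero, map_zero, add_zero] at hy
  have hy0 := LinearMap.ker_eq_bot'.1 h.ker_schurComplement _ hy
  rwa [adjoint_schurComplement_apply, hy0, map_zero, map_zero, smul_zero, add_zero] at hx

theorem ResolventBound.range_schurComplement (h : ResolventBound J γ z K)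
    (h' : ResolventBound J (γ†) (conj z) K') : (schurComplement J γ z).range = ⊤ := by
  have : CompleteSpace (schurComplement J γ z).range :=
    h.isClosed_range_schurComplement.completeSpace_coe
  rw [← Submodule.orthogonal_eq_bot_iff, ContinuousLinearMap.orthogonal_range,
    h'.ker_adjoint_schurComplement]

theorem ResolventBound.exists_solution (h : ResolventBound J γ z K)
    (h' : ResolventBound J (γ†) (conj z) K') :
    ∃ S : (H₀ × H₁) →L[ℂ] (H₁ × H₀), ∀ p,
      z • J (S p).1 + γ (J (S p).1) - (S p).2 = p.1 ∧ z • (J†) (S p).2 + (S p).1 = p.2 := by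
  let M := ContinuousLinearEquiv.ofBijective (schurComplement J γ z) h.ker_schurComplement
    (h.range_schurComplement h')
  let Q : (H₀ × H₁) →L[ℂ] H₀ := (M.symm : H₀ →L[ℂ] H₀) ∘L
    ((z • 1 + γ) ∘L J ∘L ContinuousLinearMap.snd ℂ H₀ H₁ - ContinuousLinearMap.fst ℂ H₀ H₁)
  refine ⟨(ContinuousLinearMap.snd ℂ H₀ H₁ - z • (J†) ∘L Q).prod Q, fun p => ⟨?_, ?_⟩⟩
  · have hQ : schurComplement J γ z (Q p) = z • J p.2 + γ (J p.2) - p.1 := by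
      simp [Q, M]
    rw [schurComplement_apply] at hQ
    simp only [ContinuousLinearMap.prod_apply, FunLike.coe_sub,
      FunLike.coe_smul, ContinuousLinearMap.coe_snd', ContinuousLinearMap.comp_apply,
      Pi.sub_apply, Pi.smul_apply, map_sub, map_smul]
    linear_combination (norm := module) -hQ
  · simp

theorem ResolventBound.exists_resolvent (h : ResolventBound J γ z K) (hK : 0 ≤ K)
    (h' : ResolventBound J (γ†) (conj z) K') :
    ∃ S : (H₀ × H₁) →L[ℂ] (H₁ × H₀), ‖(J.prodMap (J†)) ∘L S‖ ≤ 2 * K ∧ ∀ p,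
      z • J (S p).1 + γ (J (S p).1) - (S p).2 = p.1 ∧ z • (J†) (S p).2 + (S p).1 = p.2 := by
  obtain ⟨S, hS⟩ := h.exists_solution h'
  refine ⟨S, ContinuousLinearMap.opNorm_le_bound _ (by positivity) fun p => ?_, hS⟩
  have hp := h (S p).1 (S p).2
  rw [(hS p).1, (hS p).2] at hp
  calc ‖(J.prodMap (J†) ∘L S) p‖ ≤ ‖J (S p).1‖ + ‖(J†) (S p).2‖ :=
        (Prod.norm_def _).trans_le (max_le_add_of_nonneg (norm_nonneg _) (norm_nonneg _))
    _ ≤ K * (‖p.1‖ + ‖p.2‖) := hp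
    _ ≤ 2 * K * ‖p‖ := by nlinarith [norm_fst_le p, norm_snd_le p]

end

/-- for `Re γ ≥ c > 0` and `C` densely defined, closed, injective and
surjective, the operator `B := -[[γ,0],[0,0]] - [[0,-C*],[C,0]]`,
`B(u,v) = (-γu + C* v, -Cu)` on `dom C × dom C*`, satisfies: there is `δ > 0` such that
every `z` with `Re z > -δ` is in the resolvent set of `B` and the resolvents
`(z - B)⁻¹` are uniformly bounded there. -/
theorem stmt8 {H₀ H₁ : Type*} [NormedAddCommGroup H₀] [InnerProductSpace ℂ H₀] [CompleteSpace H₀]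
    [NormedAddCommGroup H₁] [InnerProductSpace ℂ H₁] [CompleteSpace H₁]
    (γ : H₀ →L[ℂ] H₀) (c : ℝ) (hc : 0 < c)
    (hγ : ∀ x : H₀, c * ‖x‖ ^ 2 ≤ (inner ℂ (γ x) x : ℂ).re)
    (C : H₀ →ₗ.[ℂ] H₁) (hdense : Dense (C.domain : Set H₀)) (hclosed : C.IsClosed)
    (hinj : ∀ u : C.domain, C u = 0 → (u : H₀) = 0)
    (hsurj : ∀ g : H₁, ∃ u : C.domain, C u = g) :
    ∃ δ > (0 : ℝ), ∃ K : ℝ, ∀ z : ℂ, -δ < z.re →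
      ∃ R : (H₀ × H₁) →L[ℂ] (H₀ × H₁), ‖R‖ ≤ K ∧
        (∀ (u : C.domain) (v : C.adjoint.domain),
          R (z • (↑u : H₀) + γ ↑u - C.adjoint v, z • (↑v : H₁) + C u) = (↑u, ↑v)) ∧
        ∀ (f : H₀) (g : H₁),
          ∃ (hu : (R (f, g)).1 ∈ C.domain) (hv : (R (f, g)).2 ∈ C.adjoint.domain),
            z • (R (f, g)).1 + γ (R (f, g)).1 - C.adjoint ⟨(R (f, g)).2, hv⟩ = f ∧
            z • (R (f, g)).2 + C ⟨(R (f, g)).1, hu⟩ = g := by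
  obtain ⟨J, hJ⟩ := hclosed.exists_isInverse
    ⟨(injective_iff_map_eq_zero C.toFun).2 fun u hu => Subtype.ext (hinj u hu), hsurj⟩
  have hJ' := hJ.adjoint hdense
  have hγ' (x : H₀) : c * ‖x‖ ^ 2 ≤ (⟪(γ†) x, x⟫).re := by
    rw [ContinuousLinearMap.adjoint_inner_left, ← inner_conj_symm, Complex.conj_re]
    exact hγ x
  obtain ⟨δ, hδ, K, hK, hbound⟩ := exists_resolventBound J hc (norm_nonneg γ)
  refine ⟨δ, hδ, 2 * K, fun z hz => ?_⟩
  have h := hbound γ le_rfl hγ z hz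
  obtain ⟨S, hSnorm, hS⟩ := h.exists_resolvent hK
    (hbound (γ†) (LinearIsometryEquiv.norm_map _ γ).le hγ' (conj z) (by rwa [Complex.conj_re]))
  refine ⟨_, hSnorm, fun u v => ?_, fun f g => ?_⟩
  · set p : H₀ × H₁ := (z • (u : H₀) + γ u - C.adjoint v, z • (v : H₁) + C u)
    obtain ⟨hu, hv⟩ := h.apply_eq (a' := C u) (b' := C.adjoint v)
      ((hS p).1.trans (by rw [hJ.inverse_apply])) ((hS p).2.trans (by rw [hJ'.inverse_apply]))
    exact Prod.ext (hu.trans (hJ.inverse_apply u)) (hv.trans (hJ'.inverse_apply v))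
  · obtain ⟨hf, hg⟩ := hS (f, g)
    exact ⟨hJ.mem_domain _, hJ'.mem_domain _, by simpa [hJ'.apply_mk] using hf,
      by simpa [hJ.apply_mk] using hg⟩
end

section
/- Let H₀, H₁ be Hilbert spaces, γ ∈ L(H₀) with Re γ ≥ c > 0, C : dom(C) ⊆ H₀ → H₁ densely defined, closed, injective and surjective. Let z ∈ ℂ \ {0}, δ > 0 with δ ≠ -z, and (u, v) ∈ dom(C) × dom(C*), (f, g) ∈ H₀ × H₁. Then (z + [[γ,0],[0,0]] + [[0,-C*],[C,0]])(u,v) = (f,g) if and only if, setting u_δ := (1 + δ/z)u, the pair (u_δ, v) satisfies (z + [[γ-δ, (γ-δ)δ C⁻¹],[0, δ]] + [[0,-C*],[C,0]])(u_δ, v) = (f + (γ-δ)(δ/z)C⁻¹ g, (1 + δ/z)g). -/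
/-!
The transformed system is the original one left-multiplied by the upper triangular operator
`[[1, (δ/z)(γ - δ)C⁻¹], [0, 1 + δ/z]]`, which is injective because `1 + δ/z = (z + δ)/z ≠ 0`.
Since `C⁻¹ (z v + C u) = z C⁻¹ v + u`, the first transformed row is the first original row plus
`(δ/z)(γ - δ)C⁻¹` applied to the second, and the second transformed row is `1 + δ/z` times the
second original row.
-/

theorem eq_and_eq_iff_add_and_smul_eq {𝕜 M N : Type*} [DivisionRing 𝕜] [AddGroup M]
    [AddCommGroup N] [Module 𝕜 N] (K : N → M) {a : 𝕜} (ha : a ≠ 0) (x f : M) (y g : N) :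
    (x = f ∧ y = g) ↔ (x + K y = f + K g ∧ a • y = a • g) := by
  constructor
  · rintro ⟨rfl, rfl⟩
    exact ⟨rfl, rfl⟩
  · rintro ⟨hx, hy⟩
    obtain rfl : y = g := smul_right_injective N ha hy
    exact ⟨add_right_cancel hx, rfl⟩

section ShiftedRows

variable {𝕜 E F : Type*} [Field 𝕜] [AddCommGroup E] [Module 𝕜 E] [AddCommGroup F] [Module 𝕜 F]
  {z δ : 𝕜}

theorem shifted_first_row (hz : z ≠ 0) {Φ : Type*} [FunLike Φ E E] [LinearMapClass Φ 𝕜 E E]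
    (γ : Φ) (u p q : E) :
    z • ((1 + δ / z) • u) + (γ ((1 + δ / z) • u) - δ • ((1 + δ / z) • u))
        + δ • (γ p - δ • p) - q
      = (z • u + γ u - q) + (δ / z) • (γ (z • p + u) - δ • (z • p + u)) := by
  simp only [map_add, map_smul]
  match_scalars <;> field_simp
  ring

theorem shifted_second_row (hz : z ≠ 0) (v w : F) :
    z • v + δ • v + (1 + δ / z) • w = (1 + δ / z) • (z • v + w) := by
  match_scalars <;> field_simp

end ShiftedRows

theorem stmt9_general {H₀ H₁ : Type*} [NormedAddCommGroup H₀] [InnerProductSpace ℂ H₀] [CompleteSpace H₀]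
    [NormedAddCommGroup H₁] [InnerProductSpace ℂ H₁]
    (γ : H₀ →L[ℂ] H₀)
    (C : H₀ →ₗ.[ℂ] H₁)
    (Cinv : H₁ →L[ℂ] H₀)
    (hCinv₁ : ∀ u : C.domain, Cinv (C u) = ↑u)
    (z : ℂ) (hz : z ≠ 0) (δ : ℝ) (hδz : (δ : ℂ) ≠ -z)
    (u : C.domain) (v : C.adjoint.domain) (f : H₀) (g : H₁) :
    (z • (↑u : H₀) + γ ↑u - C.adjoint v = f ∧ z • (↑v : H₁) + C u = g) ↔
      (z • ((1 + (δ : ℂ) / z) • (↑u : H₀))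
          + (γ ((1 + (δ : ℂ) / z) • (↑u : H₀)) - (δ : ℂ) • ((1 + (δ : ℂ) / z) • (↑u : H₀)))
          + (δ : ℂ) • (γ (Cinv ↑v) - (δ : ℂ) • Cinv ↑v)
          - C.adjoint v
          = f + ((δ : ℂ) / z) • (γ (Cinv g) - (δ : ℂ) • Cinv g) ∧
        z • (↑v : H₁) + (δ : ℂ) • (↑v : H₁) + C ((1 + (δ : ℂ) / z) • u)
          = (1 + (δ : ℂ) / z) • g) := by
  have ha : 1 + (δ : ℂ) / z ≠ 0 := by
    rw [one_add_div hz]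
    exact div_ne_zero (fun h => hδz (eq_neg_of_add_eq_zero_right h)) hz
  have hCinv : Cinv (z • (v : H₁) + C u) = z • Cinv v + u := by
    rw [map_add, map_smul, hCinv₁]
  rw [shifted_first_row hz, ← hCinv, LinearPMap.map_smul, shifted_second_row hz]
  exact eq_and_eq_iff_add_and_smul_eq (fun y => ((δ : ℂ) / z) • (γ (Cinv y) - (δ : ℂ) • Cinv y))
    ha _ _ _ _

/-- change-of-variables equivalence. For `Re γ ≥ c > 0`, `C` densely defined,
closed, injective and surjective with bounded inverse `Cinv`, `z ≠ 0`, `δ > 0`, `δ ≠ -z`: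
`(z + [[γ,0],[0,0]] + [[0,-C*],[C,0]])(u,v) = (f,g)` iff, with `u_δ := (1 + δ/z) u`,
`(z + [[γ-δ, (γ-δ)δC⁻¹],[0,δ]] + [[0,-C*],[C,0]])(u_δ, v)
   = (f + (γ-δ)(δ/z)C⁻¹ g, (1 + δ/z) g)`. -/
theorem stmt9 {H₀ H₁ : Type*} [NormedAddCommGroup H₀] [InnerProductSpace ℂ H₀] [CompleteSpace H₀]
    [NormedAddCommGroup H₁] [InnerProductSpace ℂ H₁] [CompleteSpace H₁]
    (γ : H₀ →L[ℂ] H₀) (c : ℝ) (hc : 0 < c)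
    (hγ : ∀ x : H₀, c * ‖x‖ ^ 2 ≤ (inner ℂ (γ x) x : ℂ).re)
    (C : H₀ →ₗ.[ℂ] H₁) (hdense : Dense (C.domain : Set H₀)) (hclosed : C.IsClosed)
    (hinj : ∀ u : C.domain, C u = 0 → (u : H₀) = 0)
    (Cinv : H₁ →L[ℂ] H₀)
    (hCinv₁ : ∀ u : C.domain, Cinv (C u) = ↑u)
    (hCinv₂ : ∀ g : H₁, ∃ h : Cinv g ∈ C.domain, C ⟨Cinv g, h⟩ = g)
    (z : ℂ) (hz : z ≠ 0) (δ : ℝ) (hδ : 0 < δ) (hδz : (δ : ℂ) ≠ -z)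
    (u : C.domain) (v : C.adjoint.domain) (f : H₀) (g : H₁) :
    (z • (↑u : H₀) + γ ↑u - C.adjoint v = f ∧ z • (↑v : H₁) + C u = g) ↔
      (z • ((1 + (δ : ℂ) / z) • (↑u : H₀))
          + (γ ((1 + (δ : ℂ) / z) • (↑u : H₀)) - (δ : ℂ) • ((1 + (δ : ℂ) / z) • (↑u : H₀)))
          + (δ : ℂ) • (γ (Cinv ↑v) - (δ : ℂ) • Cinv ↑v)
          - C.adjoint v
          = f + ((δ : ℂ) / z) • (γ (Cinv g) - (δ : ℂ) • Cinv g) ∧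
        z • (↑v : H₁) + (δ : ℂ) • (↑v : H₁) + C ((1 + (δ : ℂ) / z) • u)
          = (1 + (δ : ℂ) / z) • g) :=
  stmt9_general γ C Cinv hCinv₁ z hz δ hδz u v f g
end

section
/- Let H₀, H₁ be Hilbert spaces and C : dom(C) ⊆ H₀ → H₁ densely defined and closed. If the embedding of dom(C) ∩ ker(C)^⊥ (with the graph norm of C) into H₀ is compact, then ran(C) is closed in H₁. -/
/-!
A compact embedding of `dom C ∩ (ker C)ᗮ` forces the closed range inequality
`‖x‖ ≤ c ‖C x‖` on `dom C ∩ (ker C)ᗮ`: otherwise there are unit vectors `u n` there with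
`C (u n) → 0`, a subsequence converges to some `x`, and closedness of `C` puts `x` in `ker C`,
while `x` also lies in the closed subspace `(ker C)ᗮ`; so `x = 0`, contradicting `‖x‖ = 1`.
Conversely the inequality makes `ran C` closed: after projecting away the (closed) kernel,
preimages of a convergent sequence in `ran C` form a Cauchy sequence, and closedness of `C`
identifies the image of its limit.
-/

open Filter Topology

theorem cauchySeq_of_dist_le_mul {α β : Type*} [PseudoMetricSpace α] [PseudoMetricSpace β]
    {f : ℕ → α} {g : ℕ → β} (c : ℝ) (hfg : ∀ n m, dist (f n) (f m) ≤ c * dist (g n) (g m))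
    (hg : CauchySeq g) : CauchySeq f := by
  rw [cauchySeq_iff_tendsto_dist_atTop_0] at hg ⊢
  refine squeeze_zero (fun _ => dist_nonneg) (fun nm => hfg nm.1 nm.2) ?_
  simpa using hg.const_mul c

namespace LinearPMap

section Topological

variable {R E F : Type*} [CommRing R] [AddCommGroup E] [AddCommGroup F] [Module R E] [Module R F]

def ker (f : E →ₗ.[R] F) : Submodule R E :=
  (LinearMap.ker f.toFun).map f.domain.subtype

theorem mem_ker_iff {f : E →ₗ.[R] F} {x : E} :
    x ∈ f.ker ↔ ∃ hx : x ∈ f.domain, f ⟨x, hx⟩ = 0 := by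
  constructor
  · rintro ⟨⟨y, hy⟩, hfy, rfl⟩
    exact ⟨hy, hfy⟩
  · rintro ⟨hx, hfx⟩
    exact ⟨⟨x, hx⟩, hfx, rfl⟩

theorem mem_ker_iff_mem_graph {f : E →ₗ.[R] F} {x : E} : x ∈ f.ker ↔ (x, 0) ∈ f.graph := by
  rw [mem_ker_iff, mem_graph_iff]
  constructor
  · rintro ⟨hx, hfx⟩
    exact ⟨⟨x, hx⟩, rfl, hfx⟩
  · rintro ⟨⟨y, hy⟩, rfl, hfy⟩
    exact ⟨hy, hfy⟩

variable [TopologicalSpace E] [TopologicalSpace F] {f : E →ₗ.[R] F}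

theorem IsClosed.isClosed_ker (hf : f.IsClosed) : _root_.IsClosed (f.ker : Set E) := by
  have : (f.ker : Set E) = (fun x => (x, (0 : F))) ⁻¹' f.graph := by
    ext x
    exact mem_ker_iff_mem_graph
  rw [this]
  exact hf.preimage (continuous_id.prodMk continuous_const)

theorem IsClosed.exists_apply_eq_of_tendsto (hf : f.IsClosed) {ι : Type*} {l : Filter ι}
    [l.NeBot] {u : ι → f.domain} {x : E} {y : F} (hx : Tendsto (fun i => (u i : E)) l (𝓝 x))
    (hy : Tendsto (fun i => f (u i)) l (𝓝 y)) : ∃ h : x ∈ f.domain, f ⟨x, h⟩ = y := by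
  have hxy : (x, y) ∈ f.graph :=
    hf.mem_of_tendsto (hx.prodMk_nhds hy) (Eventually.of_forall fun i => f.mem_graph (u i))
  obtain ⟨⟨z, hz⟩, rfl, hfz⟩ := (mem_graph_iff f).1 hxy
  exact ⟨hz, hfz⟩

end Topological

section Hilbert

variable {𝕜 E F : Type*} [RCLike 𝕜] [NormedAddCommGroup E] [InnerProductSpace 𝕜 E]
  [NormedAddCommGroup F] [NormedSpace 𝕜 F] {C : E →ₗ.[𝕜] F}

/-- The embedding of `dom C ∩ (ker C)ᗮ`, with the graph norm, into `E` is compact, in the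
sequential formulation. -/
def IsCompactEmbeddingKerOrthogonal (C : E →ₗ.[𝕜] F) : Prop :=
  ∀ u : ℕ → C.domain, (∀ n, (u n : E) ∈ C.kerᗮ) → (∃ M : ℝ, ∀ n, ‖(u n : E)‖ + ‖C (u n)‖ ≤ M) →
    ∃ φ : ℕ → ℕ, StrictMono φ ∧ CauchySeq (fun n => (u (φ n) : E))

theorem exists_norm_eq_one_mul_norm_apply_lt {S : Submodule 𝕜 E} {c : ℝ} {x : C.domain}
    (hxS : (x : E) ∈ S) (hx : c * ‖C x‖ < ‖(x : E)‖) :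
    ∃ u : C.domain, (u : E) ∈ S ∧ ‖(u : E)‖ = 1 ∧ c * ‖C u‖ < 1 := by
  have hx0 : (x : E) ≠ 0 := by
    intro h0
    rw [h0, norm_zero, show x = 0 from Subtype.ext h0, map_zero, norm_zero, mul_zero] at hx
    exact lt_irrefl 0 hx
  have hxpos : 0 < ‖(x : E)‖ := norm_pos_iff.2 hx0
  refine ⟨(‖(x : E)‖⁻¹ : 𝕜) • x, S.smul_mem _ hxS, norm_smul_inv_norm hx0, ?_⟩
  rw [LinearPMap.map_smul, norm_smul, norm_inv, RCLike.norm_ofReal, abs_norm, ← mul_assoc,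
    mul_comm c, mul_assoc, inv_mul_lt_iff₀ hxpos, mul_one]
  exact hx

theorem IsClosed.exists_norm_le_mul_norm_apply [CompleteSpace E] (hC : C.IsClosed)
    (hcompact : C.IsCompactEmbeddingKerOrthogonal) :
    ∃ c : ℝ, ∀ x : C.domain, (x : E) ∈ C.kerᗮ → ‖(x : E)‖ ≤ c * ‖C x‖ := by
  by_contra! hunbounded
  have hunit (n : ℕ) : ∃ u : C.domain,
      (u : E) ∈ C.kerᗮ ∧ ‖(u : E)‖ = 1 ∧ ((n : ℝ) + 1) * ‖C u‖ < 1 :=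
    have ⟨x, hxS, hx⟩ := hunbounded (n + 1)
    exists_norm_eq_one_mul_norm_apply_lt hxS hx
  choose u hu_orth hu_norm hu_apply using hunit
  have hu_apply_le (n : ℕ) : ‖C (u n)‖ ≤ 1 / ((n : ℝ) + 1) := by
    rw [le_div_iff₀ (by positivity), mul_comm]
    exact (hu_apply n).le
  have hbounded : ∃ M : ℝ, ∀ n, ‖(u n : E)‖ + ‖C (u n)‖ ≤ M := by
    refine ⟨2, fun n => ?_⟩
    have : 1 / ((n : ℝ) + 1) ≤ 1 := by
      rw [div_le_one (by positivity)]
      linarith [n.cast_nonneg (α := ℝ)]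
    linarith [hu_norm n, hu_apply_le n]
  obtain ⟨φ, hφ, hcauchy⟩ := hcompact u hu_orth hbounded
  obtain ⟨x, hx⟩ := cauchySeq_tendsto_of_complete hcauchy
  have hCu : Tendsto (fun n => C (u (φ n))) atTop (𝓝 0) := by
    rw [tendsto_zero_iff_norm_tendsto_zero]
    exact squeeze_zero (fun _ => norm_nonneg _) (fun n => hu_apply_le (φ n))
      (tendsto_one_div_add_atTop_nhds_zero_nat.comp hφ.tendsto_atTop)
  have hx_ker : x ∈ C.ker := mem_ker_iff.2 (hC.exists_apply_eq_of_tendsto hx hCu)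
  have hx_orth : x ∈ C.kerᗮ :=
    C.ker.isClosed_orthogonal.mem_of_tendsto hx (Eventually.of_forall fun n => hu_orth (φ n))
  have hx_norm : ‖x‖ = 1 :=
    tendsto_nhds_unique (by simpa only [hu_norm] using hx.norm) tendsto_const_nhds
  rw [Submodule.disjoint_def.1 C.ker.orthogonal_disjoint x hx_ker hx_orth, norm_zero] at hx_norm
  exact zero_ne_one hx_norm

theorem exists_mem_ker_orthogonal_apply_eq [C.ker.HasOrthogonalProjection] (w : C.domain) :
    ∃ p : C.domain, (p : E) ∈ C.kerᗮ ∧ C p = C w := by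
  have hPw := C.ker.starProjection_apply_mem (w : E)
  obtain ⟨hPw_dom, hCPw⟩ := mem_ker_iff.1 hPw
  refine ⟨w - ⟨_, hPw_dom⟩, C.ker.sub_starProjection_mem_orthogonal _, ?_⟩
  rw [LinearPMap.map_sub, hCPw, sub_zero]

theorem IsClosed.isClosed_range_of_norm_le [CompleteSpace E] (hC : C.IsClosed)
    (hineq : ∃ c : ℝ, ∀ x : C.domain, (x : E) ∈ C.kerᗮ → ‖(x : E)‖ ≤ c * ‖C x‖) :
    _root_.IsClosed (LinearMap.range C.toFun : Set F) := by
  obtain ⟨c, hc⟩ := hineq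
  have : CompleteSpace C.ker := hC.isClosed_ker.completeSpace_coe
  refine IsSeqClosed.isClosed fun y z hy hyz => ?_
  have hpre (n : ℕ) : ∃ p : C.domain, (p : E) ∈ C.kerᗮ ∧ C p = y n :=
    have ⟨w, hw⟩ := hy n
    hw ▸ exists_mem_ker_orthogonal_apply_eq w
  choose p hp_orth hp_apply using hpre
  have hp_cauchy : CauchySeq fun n => (p n : E) := by
    refine cauchySeq_of_dist_le_mul c (fun n m => ?_) hyz.cauchySeq
    simpa only [dist_eq_norm, LinearPMap.map_sub, hp_apply, Submodule.coe_sub] using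
      hc (p n - p m) (C.kerᗮ.sub_mem (hp_orth n) (hp_orth m))
  obtain ⟨x, hx⟩ := cauchySeq_tendsto_of_complete hp_cauchy
  obtain ⟨hx_dom, hCx⟩ := hC.exists_apply_eq_of_tendsto hx (by simpa only [hp_apply] using hyz)
  exact ⟨⟨x, hx_dom⟩, hCx⟩

end Hilbert

end LinearPMap

theorem stmt13_general {H₀ H₁ : Type*} [NormedAddCommGroup H₀] [InnerProductSpace ℂ H₀] [CompleteSpace H₀]
    [NormedAddCommGroup H₁] [InnerProductSpace ℂ H₁]
    (C : H₀ →ₗ.[ℂ] H₁) (hclosed : C.IsClosed)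
    (hcompact : ∀ u : ℕ → C.domain,
      (∀ n, (↑(u n) : H₀) ∈ ((LinearMap.ker C.toFun).map C.domain.subtype)ᗮ) →
      (∃ M : ℝ, ∀ n, ‖(↑(u n) : H₀)‖ + ‖C (u n)‖ ≤ M) →
      ∃ φ : ℕ → ℕ, StrictMono φ ∧ CauchySeq (fun n => (↑(u (φ n)) : H₀))) :
    IsClosed ((LinearMap.range C.toFun : Submodule ℂ H₁) : Set H₁) :=
  hclosed.isClosed_range_of_norm_le (hclosed.exists_norm_le_mul_norm_apply hcompact)

/-- if `C` is densely defined and closed and the embedding of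
`dom C ∩ (ker C)ᗮ` (with the graph norm) into `H₀` is compact — here phrased sequentially:
every graph-norm-bounded sequence in `dom C ∩ (ker C)ᗮ` has a subsequence converging in
`H₀` — then `ran C` is closed in `H₁`. -/
theorem stmt13 {H₀ H₁ : Type*} [NormedAddCommGroup H₀] [InnerProductSpace ℂ H₀] [CompleteSpace H₀]
    [NormedAddCommGroup H₁] [InnerProductSpace ℂ H₁] [CompleteSpace H₁]
    (C : H₀ →ₗ.[ℂ] H₁) (hdense : Dense (C.domain : Set H₀)) (hclosed : C.IsClosed)
    (hcompact : ∀ u : ℕ → C.domain,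
      (∀ n, (↑(u n) : H₀) ∈ ((LinearMap.ker C.toFun).map C.domain.subtype)ᗮ) →
      (∃ M : ℝ, ∀ n, ‖(↑(u n) : H₀)‖ + ‖C (u n)‖ ≤ M) →
      ∃ φ : ℕ → ℕ, StrictMono φ ∧ CauchySeq (fun n => (↑(u (φ n)) : H₀))) :
    IsClosed ((LinearMap.range C.toFun : Submodule ℂ H₁) : Set H₁) :=
  stmt13_general C hclosed hcompact
end

section
/- Let H₀, H₁ be Hilbert spaces, γ ∈ L(H₀) with Re γ ≥ c > 0, C : dom(C) ⊆ H₀ → H₁ densely defined, closed, injective and surjective. Then the operator B₀ := [[γ, -C*],[C, 0]] with domain dom(C) × dom(C*) is continuously invertible (i.e., 0 belongs to the resolvent set of -B₀), with inverse the bounded operator [[0, C⁻¹],[-(C*)⁻¹, (C*)⁻¹ γ C⁻¹]]. -/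
/-!
Since `C⁻¹` is bounded, its Hilbert adjoint `(C⁻¹)*` is a bounded two-sided inverse of `C*`:
both identities follow by testing against `C⁻¹ g` and `u ∈ dom C` in the defining relation
`⟪C* v, u⟫ = ⟪v, C u⟫`. With `(C*)⁻¹ = (C⁻¹)*`, the block formula is then verified row by row,
and `B₀ (u, v) = 0` forces `u = C⁻¹ (C u) = 0` and `v = (C*)⁻¹ (γ u) = 0`.
-/

namespace LinearPMap

open scoped InnerProductSpace

variable {𝕜 E F : Type*} [RCLike 𝕜]
  [NormedAddCommGroup E] [InnerProductSpace 𝕜 E] [CompleteSpace E]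
  [NormedAddCommGroup F] [InnerProductSpace 𝕜 F] [CompleteSpace F]
  {T : E →ₗ.[𝕜] F} {S : F →L[𝕜] E}

theorem adjoint_mem_adjoint_domain_of_leftInverse (hS : ∀ u : T.domain, S (T u) = u) (w : E) :
    ContinuousLinearMap.adjoint S w ∈ T†.domain :=
  T.mem_adjoint_domain_of_exists _ ⟨w, fun u => by
    rw [ContinuousLinearMap.adjoint_inner_left, hS]⟩

theorem adjoint_apply_eq_of_leftInverse (hT : Dense (T.domain : Set E))
    (hS : ∀ u : T.domain, S (T u) = u) {w : E} (v : T†.domain)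
    (hv : (v : F) = ContinuousLinearMap.adjoint S w) : T† v = w :=
  adjoint_apply_eq hT v fun u => by rw [hv, ContinuousLinearMap.adjoint_inner_left, hS]

theorem adjoint_apply_adjoint_of_rightInverse (hT : Dense (T.domain : Set E))
    (hS : ∀ g : F, ∃ h : S g ∈ T.domain, T ⟨S g, h⟩ = g) (v : T†.domain) :
    ContinuousLinearMap.adjoint S (T† v) = v := by
  refine ext_inner_right 𝕜 fun g => ?_
  obtain ⟨hg, hTg⟩ := hS g
  calc ⟪ContinuousLinearMap.adjoint S (T† v), g⟫_𝕜
      = ⟪T† v, ((⟨S g, hg⟩ : T.domain) : E)⟫_𝕜 := ContinuousLinearMap.adjoint_inner_left _ _ _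
    _ = ⟪(v : F), T ⟨S g, hg⟩⟫_𝕜 := adjoint_isFormalAdjoint hT v _
    _ = ⟪(v : F), g⟫_𝕜 := by rw [hTg]

end LinearPMap

theorem stmt19_general {H₀ H₁ : Type*} [NormedAddCommGroup H₀] [InnerProductSpace ℂ H₀] [CompleteSpace H₀]
    [NormedAddCommGroup H₁] [InnerProductSpace ℂ H₁] [CompleteSpace H₁]
    (γ : H₀ →L[ℂ] H₀)
    (C : H₀ →ₗ.[ℂ] H₁) (hdense : Dense (C.domain : Set H₀))
    (Cinv : H₁ →L[ℂ] H₀)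
    (hCinv₁ : ∀ u : C.domain, Cinv (C u) = ↑u)
    (hCinv₂ : ∀ g : H₁, ∃ h : Cinv g ∈ C.domain, C ⟨Cinv g, h⟩ = g) :
    -- (C*)⁻¹ exists as a bounded operator ...
    ∃ Dinv : H₀ →L[ℂ] H₁,
      (∀ v : C.adjoint.domain, Dinv (C.adjoint v) = ↑v) ∧
      (∀ w : H₀, ∃ h : Dinv w ∈ C.adjoint.domain, C.adjoint ⟨Dinv w, h⟩ = w) ∧
      -- ... B₀ is injective ...
      (∀ (u : C.domain) (v : C.adjoint.domain),
        γ ↑u - C.adjoint v = 0 → C u = 0 → (↑u : H₀) = 0 ∧ (↑v : H₁) = 0) ∧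
      -- ... and `[[0, C⁻¹],[-(C*)⁻¹, (C*)⁻¹ γ C⁻¹]]` is a (bounded) right inverse of B₀
      ∀ (f : H₀) (g : H₁),
        ∃ (hu : Cinv g ∈ C.domain)
          (hv : -Dinv f + Dinv (γ (Cinv g)) ∈ C.adjoint.domain),
          γ (Cinv g) - C.adjoint ⟨-Dinv f + Dinv (γ (Cinv g)), hv⟩ = f ∧
          C ⟨Cinv g, hu⟩ = g := by
  set Dinv := ContinuousLinearMap.adjoint Cinv
  have hDinv_mem := LinearPMap.adjoint_mem_adjoint_domain_of_leftInverse hCinv₁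
  have hDinv_left := LinearPMap.adjoint_apply_adjoint_of_rightInverse hdense hCinv₂
  refine ⟨Dinv, hDinv_left,
    fun w => ⟨hDinv_mem w, LinearPMap.adjoint_apply_eq_of_leftInverse hdense hCinv₁ _ rfl⟩, ?_, ?_⟩
  · intro u v hB₁ hB₂
    have hu : (u : H₀) = 0 := by rw [← hCinv₁ u, hB₂, map_zero]
    refine ⟨hu, ?_⟩
    rw [← hDinv_left v, ← sub_eq_zero.mp hB₁, hu, map_zero, map_zero]
  · intro f g
    obtain ⟨hu, hCu⟩ := hCinv₂ g
    have hv : -Dinv f + Dinv (γ (Cinv g)) = Dinv (-f + γ (Cinv g)) := by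
      rw [map_add, map_neg]
    refine ⟨hu, hv ▸ hDinv_mem _, ?_, hCu⟩
    rw [LinearPMap.adjoint_apply_eq_of_leftInverse hdense hCinv₁ _ hv]
    abel

/-- for `Re γ ≥ c > 0` and `C` densely defined, closed, injective and
surjective (hence with bounded inverse `Cinv`), the operator
`B₀ = [[γ, -C*],[C, 0]] : (u,v) ↦ (γu - C*v, Cu)` on `dom C × dom C*` is continuously
invertible, with inverse the bounded block operator `[[0, C⁻¹],[-(C*)⁻¹, (C*)⁻¹ γ C⁻¹]]`:
`(f,g) ↦ (C⁻¹ g, -(C*)⁻¹ f + (C*)⁻¹ γ C⁻¹ g)` (where `(C*)⁻¹` is the bounded inverse of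
`C*`, which inherits bijectivity from `C`). -/
theorem stmt19 {H₀ H₁ : Type*} [NormedAddCommGroup H₀] [InnerProductSpace ℂ H₀] [CompleteSpace H₀]
    [NormedAddCommGroup H₁] [InnerProductSpace ℂ H₁] [CompleteSpace H₁]
    (γ : H₀ →L[ℂ] H₀) (c : ℝ) (hc : 0 < c)
    (hγ : ∀ x : H₀, c * ‖x‖ ^ 2 ≤ (inner ℂ (γ x) x : ℂ).re)
    (C : H₀ →ₗ.[ℂ] H₁) (hdense : Dense (C.domain : Set H₀)) (hclosed : C.IsClosed)
    (hinj : ∀ u : C.domain, C u = 0 → (u : H₀) = 0)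
    (Cinv : H₁ →L[ℂ] H₀)
    (hCinv₁ : ∀ u : C.domain, Cinv (C u) = ↑u)
    (hCinv₂ : ∀ g : H₁, ∃ h : Cinv g ∈ C.domain, C ⟨Cinv g, h⟩ = g) :
    -- (C*)⁻¹ exists as a bounded operator ...
    ∃ Dinv : H₀ →L[ℂ] H₁,
      (∀ v : C.adjoint.domain, Dinv (C.adjoint v) = ↑v) ∧
      (∀ w : H₀, ∃ h : Dinv w ∈ C.adjoint.domain, C.adjoint ⟨Dinv w, h⟩ = w) ∧
      -- ... B₀ is injective ...
      (∀ (u : C.domain) (v : C.adjoint.domain),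
        γ ↑u - C.adjoint v = 0 → C u = 0 → (↑u : H₀) = 0 ∧ (↑v : H₁) = 0) ∧
      -- ... and `[[0, C⁻¹],[-(C*)⁻¹, (C*)⁻¹ γ C⁻¹]]` is a (bounded) right inverse of B₀
      ∀ (f : H₀) (g : H₁),
        ∃ (hu : Cinv g ∈ C.domain)
          (hv : -Dinv f + Dinv (γ (Cinv g)) ∈ C.adjoint.domain),
          γ (Cinv g) - C.adjoint ⟨-Dinv f + Dinv (γ (Cinv g)), hv⟩ = f ∧
          C ⟨Cinv g, hu⟩ = g :=
  stmt19_general γ C hdense Cinv hCinv₁ hCinv₂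
end
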